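/- arXiv:2501.10099 — 10 statements merged into one kernel-verified Lean document; each statement's English description precedes it below -/
import Mathlib

section
/- For a probability distribution p on a finite set X and α ∈ (0,1)∪(1,∞), the Rényi entropy of order α of the (1/α)-tilted distribution of p equals the Rényi entropy of order 1/α of p: H_α(p^(1/α)) = H_{1/α}(p). -/
open BigOperators

/-- The α-tilted (escort) distribution of `p`. -/
noncomputable def tilt {X : Type*} [Fintype X] (p : X → ℝ) (a : ℝ) : X → ℝ :=
  fun x => p x ^ a / ∑ x', p x' ^ a

/-- The Rényi entropy of order `a` of a distribution `p`. -/
noncomputable def renyi {X : Type*} [Fintype X] (p : X → ℝ) (a : ℝ) : ℝ :=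
  (1 / (1 - a)) * Real.log (∑ x, p x ^ a)

/-- `H_α(p^(1/α)) = H_{1/α}(p)` for `α ∈ (0,1)∪(1,∞)`. -/
theorem renyi_tilt_inv {X : Type*} [Fintype X] (p : X → ℝ)
    (hp : ∀ x, 0 ≤ p x) (hp1 : ∑ x, p x = 1)
    (α : ℝ) (hα0 : 0 < α) (hα1 : α ≠ 1) :
    renyi (tilt p (1 / α)) α = renyi p (1 / α) := by
  set S := ∑ x, p x ^ (1/α) with hS
  have hαne : α ≠ 0 := ne_of_gt hα0
  have hx : ∃ x, 0 < p x := by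
    by_contra h
    push_neg at h
    have h0 : ∑ x, p x = 0 := Finset.sum_eq_zero (fun x _ => le_antisymm (h x) (hp x))
    rw [h0] at hp1
    exact one_ne_zero hp1.symm
  have hSpos : 0 < S := by
    obtain ⟨x, hx⟩ := hx
    apply Finset.sum_pos' (fun i _ => Real.rpow_nonneg (hp i) _)
    exact ⟨x, Finset.mem_univ x, Real.rpow_pos_of_pos hx _⟩
  have hsum : ∑ x, tilt p (1/α) x ^ α = S ^ (-α) := by
    have key : ∀ x, tilt p (1/α) x ^ α = p x / S ^ α := by
      intro x
      unfold tilt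
      rw [Real.div_rpow (Real.rpow_nonneg (hp x) _) hSpos.le]
      congr 1
      rw [← Real.rpow_mul (hp x), one_div_mul_cancel hαne, Real.rpow_one]
    rw [Finset.sum_congr rfl (fun x _ => key x), ← Finset.sum_div, hp1,
        Real.rpow_neg hSpos.le, one_div, inv_eq_one_div]
  unfold renyi
  rw [hsum, Real.log_rpow hSpos]
  have hne1 : (1:ℝ) - α ≠ 0 := by
    intro h; apply hα1; linarith
  have hne2 : (1:ℝ) - 1/α ≠ 0 := by
    rw [sub_ne_zero]
    intro h
    apply hα1
    field_simp at h
    linarith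
  rw [← hS]
  have hkey : 1/(1-1/α) = (1/(1-α)) * (-α) := by
    rw [div_eq_iff hne2]
    field_simp
    ring
  rw [hkey]
  ring
end

section
/- For α ∈ (0,1)∪(1,∞) and a probability distribution p on a finite set X, the maximum over all probability distributions r on X of the expected α-score E^p[g_α(X,r)], where g_α(x,r) = (α/(α−1)) r(x)^{1−1/α}, equals (α/(α−1)) · (Σ_x p(x)^α)^{1/α}, and the maximum is attained at r = p^(α), the α-tilted distribution of p. -/
open BigOperators

/-- `p` is a probability distribution on the finite set `X`. -/
def IsDist {X : Type*} [Fintype X] (p : X → ℝ) : Prop :=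
  (∀ x, 0 ≤ p x) ∧ ∑ x, p x = 1

/-!
For `α > 1` Hölder's inequality with exponents `α` and `α / (α - 1)` bounds
`∑ p r^{1-1/α}` by `‖p‖_α ‖r‖_1^{1-1/α} = ‖p‖_α`. For `α < 1` the power-mean (Jensen)
inequality with weights `r` and exponent `1/α ≥ 1`, applied to `p^α / r`, gives the reverse
bound `‖p‖_α ≤ ∑ p r^{1-1/α}`, and the sign of `α / (α - 1)` flips with it. In both cases the
bound is attained at the tilted distribution, where `p r^{1-1/α}` is proportional to `p^α`.
-/

open Finset Real

section

variable {X : Type*} [Fintype X] {p r : X → ℝ}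

lemma IsDist.sum_rpow_pos (hp : IsDist p) (a : ℝ) : 0 < ∑ x, p x ^ a := by
  obtain ⟨x₀, -, hx₀⟩ := exists_lt_of_sum_lt (s := univ) (f := fun _ => (0 : ℝ)) (g := p)
    (by simp [hp.2])
  exact sum_pos' (fun x _ => rpow_nonneg (hp.1 x) a) ⟨x₀, mem_univ _, rpow_pos_of_pos hx₀ a⟩

lemma isDist_tilt (hp : IsDist p) (a : ℝ) : IsDist (tilt p a) :=
  ⟨fun x => div_nonneg (rpow_nonneg (hp.1 x) a) (hp.sum_rpow_pos a).le,
    by simp only [tilt]; rw [← sum_div, div_self (hp.sum_rpow_pos a).ne']⟩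

lemma tilt_pos (hp : IsDist p) (hpos : ∀ x, 0 < p x) (a : ℝ) (x : X) : 0 < tilt p a x :=
  div_pos (rpow_pos_of_pos (hpos x) a) (hp.sum_rpow_pos a)

lemma sum_mul_tilt_rpow (hp : IsDist p) {α : ℝ} (hα : α ≠ 0) :
    ∑ x, p x * tilt p α x ^ (1 - 1 / α) = (∑ x, p x ^ α) ^ (1 / α) := by
  set S := ∑ x, p x ^ α
  have hS : 0 < S := hp.sum_rpow_pos α
  have hterm : ∀ x, p x * tilt p α x ^ (1 - 1 / α) = p x ^ α / S ^ (1 - 1 / α) := by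
    intro x
    have hpx := hp.1 x
    rw [tilt, div_rpow (rpow_nonneg hpx α) hS.le, ← rpow_mul hpx, mul_div_assoc',
      show α * (1 - 1 / α) = α - 1 by field_simp, mul_comm,
      ← rpow_add_one' hpx (by simpa using hα), sub_add_cancel]
  rw [sum_congr rfl fun x _ => hterm x, ← sum_div, div_eq_iff (rpow_pos_of_pos hS _).ne',
    ← rpow_add hS, add_sub_cancel, rpow_one]

lemma sum_mul_rpow_le_rpow_sum_rpow (hp : ∀ x, 0 ≤ p x) (hr : IsDist r) {α : ℝ} (hα : 1 < α) :
    ∑ x, p x * r x ^ (1 - 1 / α) ≤ (∑ x, p x ^ α) ^ (1 / α) := by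
  have hr_pow : ∀ x, (r x ^ (1 - 1 / α)) ^ conjExponent α = r x := by
    intro x
    have : α - 1 ≠ 0 := by linarith
    rw [← rpow_mul (hr.1 x), conjExponent, show (1 - 1 / α) * (α / (α - 1)) = 1 by field_simp,
      rpow_one]
  simpa only [hr_pow, hr.2, one_rpow, mul_one] using
    inner_le_Lp_mul_Lq_of_nonneg univ (HolderConjugate.conjExponent hα) (fun x _ => hp x)
      (fun x _ => rpow_nonneg (hr.1 x) (1 - 1 / α))

lemma rpow_sum_rpow_le_sum_mul_rpow (hp : ∀ x, 0 ≤ p x) (hr : IsDist r) (hr_pos : ∀ x, 0 < r x)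
    {α : ℝ} (hα0 : 0 < α) (hα1 : α < 1) :
    (∑ x, p x ^ α) ^ (1 / α) ≤ ∑ x, p x * r x ^ (1 - 1 / α) := by
  have hmean_weight : ∀ x, r x * (p x ^ α / r x) = p x ^ α :=
    fun x => mul_div_cancel₀ _ (hr_pos x).ne'
  have hmean_pow : ∀ x, r x * (p x ^ α / r x) ^ (1 / α) = p x * r x ^ (1 - 1 / α) := by
    intro x
    rw [div_rpow (rpow_nonneg (hp x) α) (hr_pos x).le, ← rpow_mul (hp x),
      mul_one_div_cancel hα0.ne', rpow_one, rpow_sub (hr_pos x), rpow_one]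
    field_simp
  simpa only [hmean_weight, hmean_pow] using
    rpow_arith_mean_le_arith_mean_rpow univ r (fun x => p x ^ α / r x) (fun x _ => hr.1 x) hr.2
      (fun x _ => div_nonneg (rpow_nonneg (hp x) α) (hr.1 x)) (one_le_one_div hα0 hα1.le)

end

theorem max_expected_alpha_score_general {X : Type*} [Fintype X]
    (α : ℝ) (hα0 : 0 < α) (hα1 : α ≠ 1)
    (p : X → ℝ) (hp : IsDist p) (hps : α < 1 → ∀ x, 0 < p x) :
    IsGreatest {v : ℝ | ∃ r : X → ℝ, IsDist r ∧ (α < 1 → ∀ x, 0 < r x) ∧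
        v = ∑ x, p x * (α / (α - 1) * r x ^ (1 - 1 / α))}
      (α / (α - 1) * (∑ x, p x ^ α) ^ (1 / α)) ∧
    ∑ x, p x * (α / (α - 1) * tilt p α x ^ (1 - 1 / α))
      = α / (α - 1) * (∑ x, p x ^ α) ^ (1 / α) := by
  have hscore : ∀ r : X → ℝ, ∑ x, p x * (α / (α - 1) * r x ^ (1 - 1 / α))
      = α / (α - 1) * ∑ x, p x * r x ^ (1 - 1 / α) := fun r => by
    simp_rw [mul_left_comm (p _), ← mul_sum]
  have htilt : ∑ x, p x * (α / (α - 1) * tilt p α x ^ (1 - 1 / α))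
      = α / (α - 1) * (∑ x, p x ^ α) ^ (1 / α) := by
    rw [hscore, sum_mul_tilt_rpow hp hα0.ne']
  refine ⟨⟨⟨tilt p α, isDist_tilt hp α, fun h => tilt_pos hp (hps h) α, htilt.symm⟩, ?_⟩, htilt⟩
  rintro v ⟨r, hr, hr_pos, rfl⟩
  rw [hscore]
  rcases hα1.lt_or_gt with hlt | hgt
  · exact mul_le_mul_of_nonpos_left (rpow_sum_rpow_le_sum_mul_rpow hp.1 hr (hr_pos hlt) hα0 hlt)
      (div_nonpos_of_nonneg_of_nonpos hα0.le (by linarith))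
  · exact mul_le_mul_of_nonneg_left (sum_mul_rpow_le_rpow_sum_rpow hp.1 hr hgt)
      (div_nonneg hα0.le (by linarith))

/-- The maximal expected α-score `E^p[g_α(X,r)]`, with `g_α(x,r) = (α/(α-1)) r(x)^{1-1/α}`,
over distributions `r` (with full support when `α < 1`) equals
`(α/(α-1)) (Σ_x p(x)^α)^{1/α}`, attained at the α-tilted distribution `r = p^(α)`. -/
theorem max_expected_alpha_score {X : Type*} [Fintype X] [Nonempty X]
    (α : ℝ) (hα0 : 0 < α) (hα1 : α ≠ 1)
    (p : X → ℝ) (hp : IsDist p) (hps : α < 1 → ∀ x, 0 < p x) :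
    IsGreatest {v : ℝ | ∃ r : X → ℝ, IsDist r ∧ (α < 1 → ∀ x, 0 < r x) ∧
        v = ∑ x, p x * (α / (α - 1) * r x ^ (1 - 1 / α))}
      (α / (α - 1) * (∑ x, p x ^ α) ^ (1 / α)) ∧
    ∑ x, p x * (α / (α - 1) * tilt p α x ^ (1 - 1 / α))
      = α / (α - 1) * (∑ x, p x ^ α) ^ (1 / α) :=
  max_expected_alpha_score_general α hα0 hα1 p hp hps
end

section
/- For α ∈ (0,1)∪(1,∞), the pseudospherical score g_{α,PS}(x,r) = (α/(α−1)) (r(x)/‖r‖_α)^{α−1} is a proper scoring rule: for every probability distribution p on a finite set X and every probability distribution r on X with full support, E^p[g_{α,PS}(X,p)] ≥ E^p[g_{α,PS}(X,r)]. -/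
/-!
Write `‖r‖ = (∑ r(x)^α)^(1/α)`. The expected score of a report `r` under `p` is
`α/(α-1) · ∑ p(x) r(x)^(α-1) / ‖r‖^(α-1)`, and that of the truthful report is `α/(α-1) · ‖p‖`.
For `α > 1`, Hölder's inequality with exponents `α` and `α/(α-1)` gives
`∑ p r^(α-1) ≤ ‖p‖ ‖r‖^(α-1)`. For `α < 1` the factor `α/(α-1)` is negative and the reverse
inequality is needed; it is Hölder's inequality for the triple `(1, α/(1-α), α)` applied to the
factorisation `p = (p r^(α-1)) · r^(1-α)`, which is where full support of `r` enters.
-/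

open BigOperators

open Finset Real

section

variable {X : Type*} [Fintype X]

noncomputable def rpowNorm (α : ℝ) (f : X → ℝ) : ℝ := (∑ x, f x ^ α) ^ (1 / α)

noncomputable def pseudosphericalScore (α : ℝ) (r : X → ℝ) (x : X) : ℝ :=
  α / (α - 1) * (r x / rpowNorm α r) ^ (α - 1)

section RpowNorm

variable {α : ℝ} {f g : X → ℝ}

lemma sum_rpow_nonneg (hf : 0 ≤ f) : 0 ≤ ∑ x, f x ^ α :=
  sum_nonneg fun x _ ↦ rpow_nonneg (hf x) α

lemma rpowNorm_nonneg (hf : 0 ≤ f) : 0 ≤ rpowNorm α f :=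
  rpow_nonneg (sum_rpow_nonneg hf) _

lemma rpowNorm_rpow (hf : 0 ≤ f) (β : ℝ) :
    rpowNorm α f ^ β = (∑ x, f x ^ α) ^ (β / α) := by
  rw [rpowNorm, ← rpow_mul (sum_rpow_nonneg hf), one_div_mul_eq_div]

lemma sum_rpow_div_rpowNorm_rpow_sub_one (hα : α ≠ 0) (hf : 0 ≤ f) :
    (∑ x, f x ^ α) / rpowNorm α f ^ (α - 1) = rpowNorm α f := by
  have hpow : rpowNorm α f ^ α = ∑ x, f x ^ α := by
    rw [rpowNorm_rpow hf, div_self hα, rpow_one]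
  rw [← hpow, ← rpow_sub' (rpowNorm_nonneg hf) (by norm_num), sub_sub_cancel, rpow_one]

lemma sum_mul_rpow_sub_one_le (hα : 1 < α) (hf : 0 ≤ f) (hg : 0 ≤ g) :
    ∑ x, f x * g x ^ (α - 1) ≤ rpowNorm α f * rpowNorm α g ^ (α - 1) := by
  have hconj : α.HolderConjugate (α / (α - 1)) :=
    (holderConjugate_iff_eq_conjExponent hα).mpr rfl
  have hpow : ∀ x, (g x ^ (α - 1)) ^ (α / (α - 1)) = g x ^ α := fun x ↦ by
    rw [← rpow_mul (hg x), mul_div_cancel₀ _ (sub_ne_zero.mpr hα.ne')]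
  have holder := inner_le_Lp_mul_Lq_of_nonneg univ hconj (fun x _ ↦ hf x)
    (fun x _ ↦ rpow_nonneg (hg x) (α - 1))
  simp only [hpow, one_div_div] at holder
  rwa [rpowNorm_rpow hg]

lemma rpowNorm_le_sum_mul_rpow_sub_one_div (hα0 : 0 < α) (hα1 : α < 1) (hf : 0 ≤ f)
    (hg : ∀ x, 0 < g x) :
    rpowNorm α f ≤ (∑ x, f x * g x ^ (α - 1)) / rpowNorm α g ^ (α - 1) := by
  have hg' : 0 ≤ g := fun x ↦ (hg x).le
  have htriple : (1 : ℝ).HolderTriple (α / (1 - α)) α :=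
    ⟨by field_simp; ring, one_pos, div_pos hα0 (sub_pos.mpr hα1)⟩
  have hprod : ∀ x, f x * g x ^ (α - 1) * g x ^ (1 - α) = f x := fun x ↦ by
    rw [mul_assoc, ← rpow_add (hg x), sub_add_sub_cancel', sub_self, rpow_zero, mul_one]
  have hpow : ∀ x, (g x ^ (1 - α)) ^ (α / (1 - α)) = g x ^ α := fun x ↦ by
    rw [← rpow_mul (hg' x), mul_div_cancel₀ _ (sub_pos.mpr hα1).ne']
  have holder := Lr_rpow_le_Lp_mul_Lq_of_nonneg univ htriple
    (f := fun x ↦ f x * g x ^ (α - 1)) (g := fun x ↦ g x ^ (1 - α))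
    (fun x _ ↦ mul_nonneg (hf x) (rpow_nonneg (hg' x) _)) (fun x _ ↦ rpow_nonneg (hg' x) _)
  simp only [hprod, hpow, rpow_one, div_one, div_div_cancel₀ hα0.ne'] at holder
  set T := ∑ x, f x * g x ^ (α - 1)
  have hT : 0 ≤ T := sum_nonneg fun x _ ↦ mul_nonneg (hf x) (rpow_nonneg (hg' x) _)
  calc rpowNorm α f ≤ (T ^ α * (∑ x, g x ^ α) ^ (1 - α)) ^ (1 / α) :=
        rpow_le_rpow (sum_rpow_nonneg hf) holder (by positivity)
    _ = T / rpowNorm α g ^ (α - 1) := by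
      rw [mul_rpow (by positivity) (rpow_nonneg (sum_rpow_nonneg hg') _), ← rpow_mul hT,
        mul_one_div_cancel hα0.ne', rpow_one, ← rpow_mul (sum_rpow_nonneg hg'), rpowNorm_rpow hg',
        div_eq_mul_inv T, ← rpow_neg (sum_rpow_nonneg hg')]
      ring_nf

end RpowNorm

section PseudosphericalScore

variable {α : ℝ} {p r : X → ℝ}

lemma sum_mul_pseudosphericalScore (hr : 0 ≤ r) :
    ∑ x, p x * pseudosphericalScore α r x
      = α / (α - 1) * ((∑ x, p x * r x ^ (α - 1)) / rpowNorm α r ^ (α - 1)) := by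
  rw [sum_div, mul_sum]
  refine sum_congr rfl fun x _ ↦ ?_
  rw [pseudosphericalScore, div_rpow (hr x) (rpowNorm_nonneg hr)]
  ring

lemma sum_mul_pseudosphericalScore_self (hα : α ≠ 0) (hp : 0 ≤ p) :
    ∑ x, p x * pseudosphericalScore α p x = α / (α - 1) * rpowNorm α p := by
  have hpow : ∀ x, p x * p x ^ (α - 1) = p x ^ α := fun x ↦ by
    rw [← rpow_one_add' (hp x) (by rwa [add_sub_cancel]), add_sub_cancel]
  simp only [sum_mul_pseudosphericalScore hp, hpow, sum_rpow_div_rpowNorm_rpow_sub_one hα hp]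

end PseudosphericalScore

end

theorem pseudospherical_proper_general {X : Type*} [Fintype X]
    (α : ℝ) (hα0 : 0 < α) (hα1 : α ≠ 1)
    (p r : X → ℝ) (hp : IsDist p) (hrs : ∀ x, 0 < r x) :
    ∑ x, p x * (α / (α - 1) * (r x / (∑ x', r x' ^ α) ^ (1 / α)) ^ (α - 1))
      ≤ ∑ x, p x * (α / (α - 1) * (p x / (∑ x', p x' ^ α) ^ (1 / α)) ^ (α - 1)) := by
  have hp0 : 0 ≤ p := hp.1
  have hr0 : 0 ≤ r := fun x ↦ (hrs x).le
  change ∑ x, p x * pseudosphericalScore α r x ≤ ∑ x, p x * pseudosphericalScore α p x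
  rw [sum_mul_pseudosphericalScore hr0, sum_mul_pseudosphericalScore_self hα0.ne' hp0]
  rcases hα1.lt_or_gt with hlt | hgt
  · exact mul_le_mul_of_nonpos_left (rpowNorm_le_sum_mul_rpow_sub_one_div hα0 hlt hp0 hrs)
      (div_nonpos_of_nonneg_of_nonpos hα0.le (by linarith))
  · exact mul_le_mul_of_nonneg_left
      (div_le_of_le_mul₀ (rpow_nonneg (rpowNorm_nonneg hr0) _) (rpowNorm_nonneg hp0)
        (sum_mul_rpow_sub_one_le hgt hp0 hr0))
      (div_nonneg hα0.le (by linarith))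

/-- The pseudospherical score `g_{α,PS}(x,r) = (α/(α-1)) (r(x)/‖r‖_α)^{α-1}` is a proper
scoring rule: for every distribution `p` and every full-support distribution `r`,
`E^p[g_{α,PS}(X,p)] ≥ E^p[g_{α,PS}(X,r)]`. -/
theorem pseudospherical_proper {X : Type*} [Fintype X]
    (α : ℝ) (hα0 : 0 < α) (hα1 : α ≠ 1)
    (p r : X → ℝ) (hp : IsDist p) (hr : IsDist r) (hrs : ∀ x, 0 < r x) :
    ∑ x, p x * (α / (α - 1) * (r x / (∑ x', r x' ^ α) ^ (1 / α)) ^ (α - 1))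
      ≤ ∑ x, p x * (α / (α - 1) * (p x / (∑ x', p x' ^ α) ^ (1 / α)) ^ (α - 1)) :=
  pseudospherical_proper_general α hα0 hα1 p r hp hrs
end

section
/- For α ∈ (0,1)∪(1,∞), the power (Tsallis) score g_{α,PW}(x,r) = (α/(α−1)) r(x)^{α−1} − ‖r‖_α^α is a proper scoring rule: for every probability distribution p on a finite set X and every distribution r on X, E^p[g_{α,PW}(X,p)] ≥ E^p[g_{α,PW}(X,r)], and consequently max_r E^p[g_{α,PW}(X,r)] = (1/(α−1)) Σ_x p(x)^α. -/
/-!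
Properness reduces to a pointwise inequality: after summing against `p`, the expected score of
`r` is `∑ₓ (α/(α-1)) p(x) r(x)^(α-1) - r(x)^α`, and `α p r^(α-1) + (1-α) r^α` is the tangent
line of the convex (`α > 1`) resp. concave (`α < 1`) function `t ↦ t^α` at `r`, evaluated at `p`.
Dividing by `α - 1` turns both cases into the same bound `p^α / (α - 1)`, attained at `r = p`.
-/

open BigOperators

namespace Real

theorem tangent_le_rpow_of_one_lt {α p r : ℝ} (hα : 1 < α) (hp : 0 ≤ p) (hr : 0 ≤ r) :
    α * p * r ^ (α - 1) + (1 - α) * r ^ α ≤ p ^ α := by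
  have hconj := HolderConjugate.conjExponent hα
  have hpow : (r ^ (α - 1)) ^ conjExponent α = r ^ α := by
    rw [← rpow_mul hr, conjExponent]
    congr 1
    field_simp [(sub_pos.mpr hα).ne']
  have young := young_inequality_of_nonneg hp (rpow_nonneg hr (α - 1)) hconj
  rw [hpow, conjExponent] at young
  calc α * p * r ^ (α - 1) + (1 - α) * r ^ α
      = α * (p * r ^ (α - 1)) - (α - 1) * r ^ α := by ring
    _ ≤ α * (p ^ α / α + r ^ α / (α / (α - 1))) - (α - 1) * r ^ α := by gcongr
    _ = p ^ α := by field_simp [(sub_pos.mpr hα).ne']; ring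

theorem rpow_le_tangent_of_le_one {α p r : ℝ} (hα0 : 0 ≤ α) (hα1 : α ≤ 1) (hp : 0 ≤ p)
    (hr : 0 < r) :
    p ^ α ≤ α * p * r ^ (α - 1) + (1 - α) * r ^ α := by
  have amgm := geom_mean_le_arith_mean2_weighted hα0 (sub_nonneg.mpr hα1) hp hr.le
    (add_sub_cancel α 1)
  have hcancel : r ^ (1 - α) * r ^ (α - 1) = 1 := by
    rw [← rpow_add hr]; simp
  have hr_mul : r * r ^ (α - 1) = r ^ α := by
    rw [rpow_sub_one hr.ne']; field_simp
  calc p ^ α = p ^ α * r ^ (1 - α) * r ^ (α - 1) := by rw [mul_assoc, hcancel, mul_one]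
    _ ≤ (α * p + (1 - α) * r) * r ^ (α - 1) := by gcongr
    _ = α * p * r ^ (α - 1) + (1 - α) * r ^ α := by rw [← hr_mul]; ring

end Real

open Real

theorem power_score_term_le {α p r : ℝ} (hα0 : 0 < α) (hα1 : α ≠ 1) (hp : 0 ≤ p) (hr : 0 ≤ r)
    (hr' : α < 1 → 0 < r) :
    α / (α - 1) * p * r ^ (α - 1) - r ^ α ≤ p ^ α / (α - 1) := by
  have hsub : α - 1 ≠ 0 := sub_ne_zero.mpr hα1
  have htangent : α / (α - 1) * p * r ^ (α - 1) - r ^ α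
      = (α * p * r ^ (α - 1) + (1 - α) * r ^ α) / (α - 1) := by
    field_simp; ring
  rw [htangent]
  rcases hα1.lt_or_gt with hlt | hgt
  · exact div_le_div_of_nonpos_of_le (by linarith)
      (rpow_le_tangent_of_le_one hα0.le hlt.le hp (hr' hlt))
  · exact div_le_div_of_nonneg_right (tangent_le_rpow_of_one_lt hgt hp hr) (by linarith)

section ExpectedScore

variable {X : Type*} [Fintype X]

/-- `E^p[g_{α,PW}(X, r)]`. -/
noncomputable def expectedPowerScore (α : ℝ) (p r : X → ℝ) : ℝ :=
  ∑ x, p x * (α / (α - 1) * r x ^ (α - 1) - ∑ x', r x' ^ α)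

theorem expectedPowerScore_eq_sum {α : ℝ} {p : X → ℝ} (hp : IsDist p) (r : X → ℝ) :
    expectedPowerScore α p r = ∑ x, (α / (α - 1) * p x * r x ^ (α - 1) - r x ^ α) := by
  simp only [expectedPowerScore, mul_sub, Finset.sum_sub_distrib, ← Finset.sum_mul, hp.2,
    one_mul]
  congr 1
  exact Finset.sum_congr rfl fun x _ => by ring

theorem expectedPowerScore_self {α : ℝ} (hα0 : α ≠ 0) (hα1 : α ≠ 1) {p : X → ℝ}
    (hp : IsDist p) :
    expectedPowerScore α p p = 1 / (α - 1) * ∑ x, p x ^ α := by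
  have hself : ∀ x, α / (α - 1) * p x * p x ^ (α - 1) - p x ^ α = 1 / (α - 1) * p x ^ α := by
    intro x
    have hmul : p x * p x ^ (α - 1) = p x ^ α := by
      rw [← rpow_one_add' (hp.1 x) (by simpa using hα0)]; ring_nf
    field_simp [sub_ne_zero.mpr hα1]
    rw [mul_assoc, hmul]; ring
  rw [expectedPowerScore_eq_sum hp, Finset.mul_sum]
  exact Finset.sum_congr rfl fun x _ => hself x

theorem expectedPowerScore_le {α : ℝ} (hα0 : 0 < α) (hα1 : α ≠ 1) {p r : X → ℝ}
    (hp : IsDist p) (hr : IsDist r) (hr' : α < 1 → ∀ x, 0 < r x) :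
    expectedPowerScore α p r ≤ 1 / (α - 1) * ∑ x, p x ^ α := by
  rw [expectedPowerScore_eq_sum hp, Finset.mul_sum]
  refine Finset.sum_le_sum fun x _ => ?_
  rw [one_div_mul_eq_div]
  exact power_score_term_le hα0 hα1 (hp.1 x) (hr.1 x) fun h => hr' h x

end ExpectedScore

theorem power_score_proper_and_max_general {X : Type*} [Fintype X]
    (α : ℝ) (hα0 : 0 < α) (hα1 : α ≠ 1)
    (p : X → ℝ) (hp : IsDist p) (hps : α < 1 → ∀ x, 0 < p x) :
    (∀ r : X → ℝ, IsDist r → (α < 1 → ∀ x, 0 < r x) →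
      ∑ x, p x * (α / (α - 1) * r x ^ (α - 1) - ∑ x', r x' ^ α)
        ≤ ∑ x, p x * (α / (α - 1) * p x ^ (α - 1) - ∑ x', p x' ^ α)) ∧
    IsGreatest {v : ℝ | ∃ r : X → ℝ, IsDist r ∧ (α < 1 → ∀ x, 0 < r x) ∧
        v = ∑ x, p x * (α / (α - 1) * r x ^ (α - 1) - ∑ x', r x' ^ α)}
      (1 / (α - 1) * ∑ x, p x ^ α) := by
  have hself := expectedPowerScore_self hα0.ne' hα1 hp
  refine ⟨fun r hr hr' => ?_, ⟨p, hp, hps, hself.symm⟩, ?_⟩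
  · change expectedPowerScore α p r ≤ expectedPowerScore α p p
    exact hself ▸ expectedPowerScore_le hα0 hα1 hp hr hr'
  · rintro _ ⟨r, hr, hr', rfl⟩
    exact expectedPowerScore_le hα0 hα1 hp hr hr'

/-- The power (Tsallis) score `g_{α,PW}(x,r) = (α/(α-1)) r(x)^{α-1} - ‖r‖_α^α` is a proper
scoring rule, and consequently the maximal expected gain over distributions `r`
(restricted to full support when `α < 1`) equals `(1/(α-1)) Σ_x p(x)^α`. -/
theorem power_score_proper_and_max {X : Type*} [Fintype X] [Nonempty X]
    (α : ℝ) (hα0 : 0 < α) (hα1 : α ≠ 1)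
    (p : X → ℝ) (hp : IsDist p) (hps : α < 1 → ∀ x, 0 < p x) :
    (∀ r : X → ℝ, IsDist r → (α < 1 → ∀ x, 0 < r x) →
      ∑ x, p x * (α / (α - 1) * r x ^ (α - 1) - ∑ x', r x' ^ α)
        ≤ ∑ x, p x * (α / (α - 1) * p x ^ (α - 1) - ∑ x', p x' ^ α)) ∧
    IsGreatest {v : ℝ | ∃ r : X → ℝ, IsDist r ∧ (α < 1 → ∀ x, 0 < r x) ∧
        v = ∑ x, p x * (α / (α - 1) * r x ^ (α - 1) - ∑ x', r x' ^ α)}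
      (1 / (α - 1) * ∑ x, p x ^ α) :=
  power_score_proper_and_max_general α hα0 hα1 p hp hps
end

section
/- For α ∈ (0,1)∪(1,∞) and a distribution p on a finite set X, the maximum over distributions r on X of the pseudospherical expected gain E^p[g_{α,PS}(X,r)] equals (α/(α−1)) (Σ_x p(x)^α)^{1/α}, i.e., the same maximal value as for the α-score. -/
open BigOperators

/-!
Writing `‖r‖_α = (∑ r^α)^(1/α)`, the expected score is `α/(α-1) · ∑ p r^(α-1) / ‖r‖_α^(α-1)`.
For `α > 1`, Hölder with exponents `α` and `α/(α-1)` gives `∑ p r^(α-1) ≤ ‖p‖_α ‖r‖_α^(α-1)`.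
For `α < 1` the prefactor is negative and the reverse inequality is needed; it is Hölder applied to
`p = (p r^(α-1)) · r^(1-α)` with exponents `1` and `α/(1-α)`, which requires `r > 0`.
Both bounds are attained at `r = p`.
-/

open Finset Real

section Holder

variable {ι : Type*} (s : Finset ι) {α : ℝ} {p r : ι → ℝ}

theorem sum_mul_rpow_sub_one_le_s6 (hα : 1 < α) (hp : ∀ i, 0 ≤ p i) (hr : ∀ i, 0 ≤ r i) :
    ∑ i ∈ s, p i * r i ^ (α - 1) ≤
      (∑ i ∈ s, p i ^ α) ^ (1 / α) * (∑ i ∈ s, r i ^ α) ^ ((α - 1) / α) := by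
  have hconj : α.HolderConjugate (α / (α - 1)) := .conjExponent hα
  have hpow : ∀ i ∈ s, (r i ^ (α - 1)) ^ (α / (α - 1)) = r i ^ α := fun i _ => by
    rw [← rpow_mul (hr i), mul_div_cancel₀ _ (sub_ne_zero.2 hα.ne')]
  simpa only [sum_congr rfl hpow, one_div_div] using
    inner_le_Lp_mul_Lq_of_nonneg s (f := p) (g := fun i => r i ^ (α - 1)) hconj
      (fun i _ => hp i) (fun i _ => rpow_nonneg (hr i) _)

theorem sum_rpow_le_rpow_mul_rpow (hα0 : 0 < α) (hα1 : α < 1) (hp : ∀ i, 0 ≤ p i)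
    (hr : ∀ i, 0 < r i) :
    ∑ i ∈ s, p i ^ α ≤ (∑ i ∈ s, p i * r i ^ (α - 1)) ^ α * (∑ i ∈ s, r i ^ α) ^ (1 - α) := by
  have htriple : (1 : ℝ).HolderTriple (α / (1 - α)) α :=
    ⟨by field_simp; ring, one_pos, div_pos hα0 (sub_pos.2 hα1)⟩
  have hprod : ∀ i ∈ s, (p i * r i ^ (α - 1) * r i ^ (1 - α)) ^ α = p i ^ α := fun i _ => by
    rw [mul_assoc, ← rpow_add (hr i), sub_add_sub_cancel', sub_self, rpow_zero, mul_one]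
  have hpow : ∀ i ∈ s, (r i ^ (1 - α)) ^ (α / (1 - α)) = r i ^ α := fun i _ => by
    rw [← rpow_mul (hr i).le, mul_div_cancel₀ _ (sub_ne_zero.2 hα1.ne')]
  have := Lr_rpow_le_Lp_mul_Lq_of_nonneg s (f := fun i => p i * r i ^ (α - 1))
    (g := fun i => r i ^ (1 - α)) htriple
    (fun i _ => mul_nonneg (hp i) (rpow_nonneg (hr i).le _)) (fun i _ => rpow_nonneg (hr i).le _)
  simpa only [sum_congr rfl hprod, sum_congr rfl hpow, rpow_one, div_one,
    div_div_cancel₀ hα0.ne'] using this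

theorem rpow_sum_rpow_mul_rpow_sum_rpow_le (hs : s.Nonempty) (hα0 : 0 < α) (hα1 : α < 1)
    (hp : ∀ i, 0 ≤ p i) (hr : ∀ i, 0 < r i) :
    (∑ i ∈ s, p i ^ α) ^ (1 / α) * (∑ i ∈ s, r i ^ α) ^ ((α - 1) / α) ≤
      ∑ i ∈ s, p i * r i ^ (α - 1) := by
  set S := ∑ i ∈ s, p i ^ α
  set N := ∑ i ∈ s, r i ^ α
  set T := ∑ i ∈ s, p i * r i ^ (α - 1)
  have hS : 0 ≤ S := sum_nonneg fun i _ => rpow_nonneg (hp i) α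
  have hN : 0 < N := sum_pos (fun i _ => rpow_pos_of_pos (hr i) α) hs
  have hT : 0 ≤ T := sum_nonneg fun i _ => mul_nonneg (hp i) (rpow_nonneg (hr i).le _)
  calc S ^ (1 / α) * N ^ ((α - 1) / α) = (S * N ^ (α - 1)) ^ (1 / α) := by
        rw [mul_rpow hS (rpow_nonneg hN.le _), ← rpow_mul hN.le, mul_one_div]
    _ ≤ (T ^ α * N ^ (1 - α) * N ^ (α - 1)) ^ (1 / α) := by
        gcongr
        exact sum_rpow_le_rpow_mul_rpow s hα0 hα1 hp hr
    _ = T := by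
        rw [mul_assoc, ← rpow_add hN, sub_add_sub_cancel', sub_self, rpow_zero, mul_one,
          ← rpow_mul hT, mul_one_div_cancel hα0.ne', rpow_one]

end Holder

noncomputable def expectedPseudosphericalScore {X : Type*} [Fintype X] (α : ℝ) (p r : X → ℝ) :
    ℝ :=
  ∑ x, p x * (α / (α - 1) * (r x / (∑ x', r x' ^ α) ^ (1 / α)) ^ (α - 1))

section ExpectedScore

variable {X : Type*} [Fintype X] {α : ℝ} {p r : X → ℝ}

theorem expectedPseudosphericalScore_eq_div (hr : ∀ x, 0 ≤ r x) :
    expectedPseudosphericalScore α p r =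
      α / (α - 1) * (∑ x, p x * r x ^ (α - 1)) / (∑ x, r x ^ α) ^ ((α - 1) / α) := by
  have hN : 0 ≤ ∑ x, r x ^ α := sum_nonneg fun x _ => rpow_nonneg (hr x) α
  simp only [expectedPseudosphericalScore, div_rpow (hr _) (rpow_nonneg hN _),
    ← rpow_mul hN, one_div_mul_eq_div, mul_sum, sum_div]
  exact sum_congr rfl fun x _ => by ring

theorem expectedPseudosphericalScore_self_eq (hα : α ≠ 0) (hp : ∀ x, 0 ≤ p x) :
    expectedPseudosphericalScore α p p = α / (α - 1) * (∑ x, p x ^ α) ^ (1 / α) := by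
  have hS : 0 ≤ ∑ x, p x ^ α := sum_nonneg fun x _ => rpow_nonneg (hp x) α
  have hpp : ∀ x, p x * p x ^ (α - 1) = p x ^ α := fun x => by
    rw [← rpow_one_add' (hp x) (by simpa using hα), add_sub_cancel]
  have hexp : 1 / α = 1 - (α - 1) / α := by field_simp; ring
  rw [expectedPseudosphericalScore_eq_div hp, sum_congr rfl fun x _ => hpp x, mul_div_assoc,
    hexp, rpow_sub' hS (by rw [← hexp]; exact one_div_ne_zero hα), rpow_one]

theorem expectedPseudosphericalScore_le_of_one_lt (hα : 1 < α) (hp : ∀ x, 0 ≤ p x)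
    (hr : ∀ x, 0 ≤ r x) :
    expectedPseudosphericalScore α p r ≤ α / (α - 1) * (∑ x, p x ^ α) ^ (1 / α) := by
  rw [expectedPseudosphericalScore_eq_div hr, mul_div_assoc]
  gcongr
  exact div_le_of_le_mul₀ (rpow_nonneg (sum_nonneg fun x _ => rpow_nonneg (hr x) α) _)
    (rpow_nonneg (sum_nonneg fun x _ => rpow_nonneg (hp x) α) _)
    (sum_mul_rpow_sub_one_le_s6 univ hα hp hr)

theorem expectedPseudosphericalScore_le_of_lt_one [Nonempty X] (hα0 : 0 < α) (hα1 : α < 1)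
    (hp : ∀ x, 0 ≤ p x) (hr : ∀ x, 0 < r x) :
    expectedPseudosphericalScore α p r ≤ α / (α - 1) * (∑ x, p x ^ α) ^ (1 / α) := by
  have hN : 0 < ∑ x, r x ^ α := sum_pos (fun x _ => rpow_pos_of_pos (hr x) α) univ_nonempty
  rw [expectedPseudosphericalScore_eq_div fun x => (hr x).le, mul_div_assoc]
  refine mul_le_mul_of_nonpos_left ?_ (div_nonpos_of_nonneg_of_nonpos hα0.le (by linarith))
  rw [le_div_iff₀ (rpow_pos_of_pos hN _)]
  exact rpow_sum_rpow_mul_rpow_sum_rpow_le univ univ_nonempty hα0 hα1 hp hr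

end ExpectedScore

/-- The maximal expected pseudospherical gain
`E^p[g_{α,PS}(X,r)]` with `g_{α,PS}(x,r) = (α/(α-1)) (r(x)/‖r‖_α)^{α-1}`,
over distributions `r` (with full support when `α < 1`), equals
`(α/(α-1)) (Σ_x p(x)^α)^{1/α}` — the same maximal value as for the α-score. -/
theorem max_expected_pseudospherical {X : Type*} [Fintype X] [Nonempty X]
    (α : ℝ) (hα0 : 0 < α) (hα1 : α ≠ 1)
    (p : X → ℝ) (hp : IsDist p) (hps : α < 1 → ∀ x, 0 < p x) :
    IsGreatest {v : ℝ | ∃ r : X → ℝ, IsDist r ∧ (α < 1 → ∀ x, 0 < r x) ∧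
        v = ∑ x, p x * (α / (α - 1) * (r x / (∑ x', r x' ^ α) ^ (1 / α)) ^ (α - 1))}
      (α / (α - 1) * (∑ x, p x ^ α) ^ (1 / α)) := by
  refine ⟨⟨p, hp, hps, (expectedPseudosphericalScore_self_eq hα0.ne' hp.1).symm⟩, ?_⟩
  rintro _ ⟨r, hr, hr_pos, rfl⟩
  rcases hα1.lt_or_gt with hlt | hgt
  · exact expectedPseudosphericalScore_le_of_lt_one hα0 hlt hp.1 (hr_pos hlt)
  · exact expectedPseudosphericalScore_le_of_one_lt hgt hp.1 hr.1
end

section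
/- For α ∈ (0,1)∪(1,∞) and a joint distribution p_{X,Y} = p_X p_{Y|X} on finite alphabets, the Hayashi mutual information satisfies I_α^H(X;Y) = D_α(p_{X_α} p_{Y|X} ‖ p_{X_α} p_Y), where p_{X_α} is the α-tilted distribution of p_X and p_Y is the Y-marginal of p_X p_{Y|X}. -/
open BigOperators

/-- `W` is a channel from `X` to `Y`. -/
def IsChannel {X Y : Type*} [Fintype Y] (W : X → Y → ℝ) : Prop :=
  ∀ x, (∀ y, 0 ≤ W x y) ∧ ∑ y, W x y = 1

/-- Hayashi MI of order α equals the Rényi divergence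
`I_α^H(X;Y) = D_α(p_{X_α} p_{Y|X} ‖ p_{X_α} p_Y)`, where `p_{X_α}` is the α-tilted
distribution of `p_X` and `p_Y` is the `Y`-marginal of `p_X p_{Y|X}`. -/
theorem hayashiMI_eq_renyiDiv_tilt {X Y : Type*} [Fintype X] [Fintype Y]
    (α : ℝ) (hα0 : 0 < α) (hα1 : α ≠ 1)
    (p : X → ℝ) (W : X → Y → ℝ)
    (hp : IsDist p) (hps : ∀ x, 0 < p x) (hW : IsChannel W) :
    renyi p α
      - (1 / (1 - α)) * Real.log (∑ y, (∑ x, p x * W x y) *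
          ∑ x, (p x * W x y / ∑ x', p x' * W x' y) ^ α)
    = (1 / (α - 1)) * Real.log (∑ x, ∑ y,
          (tilt p α x * W x y) ^ α * (tilt p α x * ∑ x', p x' * W x' y) ^ (1 - α)) := by
  classical
  have h1α : (1:ℝ) - α ≠ 0 := sub_ne_zero.mpr (Ne.symm hα1)
  have hXne : (Finset.univ : Finset X).Nonempty := by
    rcases (Finset.univ : Finset X).eq_empty_or_nonempty with h | h
    · exfalso; have := hp.2; rw [h, Finset.sum_empty] at this; norm_num at this
    · exact h
  set q : Y → ℝ := fun y => ∑ x', p x' * W x' y with hqdef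
  have hqnn : ∀ y, 0 ≤ q y := fun y =>
    Finset.sum_nonneg fun x _ => mul_nonneg (hps x).le ((hW x).1 y)
  set S : ℝ := ∑ x, p x ^ α with hSdef
  have hS0 : 0 < S :=
    Finset.sum_pos (fun x _ => Real.rpow_pos_of_pos (hps x) α) hXne
  set T : ℝ := ∑ y, q y ^ (1 - α) * ∑ x, p x ^ α * W x y ^ α with hTdef
  -- sum of q equals 1, so some q y > 0
  have hqsum : ∑ y, q y = 1 := by
    rw [hqdef]
    rw [Finset.sum_comm]
    have h : ∀ x, ∑ y, p x * W x y = p x := by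
      intro x; rw [← Finset.mul_sum, (hW x).2, mul_one]
    simp_rw [h]; exact hp.2
  have hqex : ∃ y, 0 < q y := by
    by_contra h
    push_neg at h
    have h0 : ∑ y, q y = 0 := le_antisymm (Finset.sum_nonpos fun y _ => h y)
      (Finset.sum_nonneg fun y _ => hqnn y)
    rw [hqsum] at h0; norm_num at h0
  have hT0 : 0 < T := by
    obtain ⟨y0, hy0⟩ := hqex
    have hlt : ∑ _x : X, (0:ℝ) < ∑ x, p x * W x y0 := by
      rw [Finset.sum_const_zero]; exact hy0
    obtain ⟨x0, -, hx0⟩ := Finset.exists_lt_of_sum_lt hlt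
    have hW0 : 0 < W x0 y0 := by
      rcases ((hW x0).1 y0).eq_or_lt with h | h
      · exfalso; rw [← h, mul_zero] at hx0; exact lt_irrefl _ hx0
      · exact h
    apply Finset.sum_pos' (fun y _ => mul_nonneg (Real.rpow_nonneg (hqnn y) _)
      (Finset.sum_nonneg fun x _ => mul_nonneg (Real.rpow_nonneg (hps x).le _)
        (Real.rpow_nonneg ((hW x).1 y) _)))
    refine ⟨y0, Finset.mem_univ _, mul_pos (Real.rpow_pos_of_pos hy0 _) ?_⟩
    apply Finset.sum_pos' (fun x _ => mul_nonneg (Real.rpow_nonneg (hps x).le _)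
      (Real.rpow_nonneg ((hW x).1 y0) _))
    exact ⟨x0, Finset.mem_univ _, mul_pos (Real.rpow_pos_of_pos (hps x0) _)
      (Real.rpow_pos_of_pos hW0 _)⟩
  -- LHS inner sum equals T
  have hL : (∑ y, (∑ x, p x * W x y) * ∑ x, (p x * W x y / ∑ x', p x' * W x' y) ^ α) = T := by
    rw [hTdef]
    apply Finset.sum_congr rfl
    intro y _
    show q y * ∑ x, (p x * W x y / q y) ^ α = q y ^ (1 - α) * ∑ x, p x ^ α * W x y ^ α
    rcases (hqnn y).eq_or_lt with h | h
    · rw [← h, zero_mul, Real.zero_rpow h1α, zero_mul]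
    · have hx : ∀ x, (p x * W x y / q y) ^ α = p x ^ α * W x y ^ α / q y ^ α := by
        intro x
        rw [Real.div_rpow (mul_nonneg (hps x).le ((hW x).1 y)) (hqnn y),
          Real.mul_rpow (hps x).le ((hW x).1 y)]
      simp_rw [hx]
      rw [← Finset.sum_div, Real.rpow_sub h, Real.rpow_one]
      ring
  -- RHS inner sum equals T / S
  have hR : (∑ x, ∑ y,
      (tilt p α x * W x y) ^ α * (tilt p α x * ∑ x', p x' * W x' y) ^ (1 - α)) = T / S := by
    have htilt : ∀ x, 0 < tilt p α x := fun x =>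
      div_pos (Real.rpow_pos_of_pos (hps x) α) hS0
    have hpt : ∀ x y, (tilt p α x * W x y) ^ α * (tilt p α x * q y) ^ (1 - α)
        = tilt p α x * (W x y ^ α * q y ^ (1 - α)) := by
      intro x y
      rw [Real.mul_rpow (htilt x).le ((hW x).1 y), Real.mul_rpow (htilt x).le (hqnn y)]
      have h : tilt p α x ^ α * tilt p α x ^ (1 - α) = tilt p α x := by
        rw [← Real.rpow_add (htilt x)]
        norm_num
      calc tilt p α x ^ α * W x y ^ α * (tilt p α x ^ (1 - α) * q y ^ (1 - α))
          = (tilt p α x ^ α * tilt p α x ^ (1 - α)) * (W x y ^ α * q y ^ (1 - α)) := by ring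
        _ = tilt p α x * (W x y ^ α * q y ^ (1 - α)) := by rw [h]
    calc (∑ x, ∑ y, (tilt p α x * W x y) ^ α * (tilt p α x * q y) ^ (1 - α))
        = ∑ x, ∑ y, (p x ^ α / S) * (W x y ^ α * q y ^ (1 - α)) := by
          apply Finset.sum_congr rfl; intro x _
          apply Finset.sum_congr rfl; intro y _
          rw [hpt x y]; rfl
      _ = (∑ x, ∑ y, p x ^ α * (W x y ^ α * q y ^ (1 - α))) / S := by
          rw [Finset.sum_div]
          apply Finset.sum_congr rfl; intro x _
          rw [Finset.sum_div]
          apply Finset.sum_congr rfl; intro y _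
          ring
      _ = T / S := by
          congr 1
          rw [hTdef, Finset.sum_comm]
          apply Finset.sum_congr rfl; intro y _
          rw [Finset.mul_sum]
          apply Finset.sum_congr rfl; intro x _
          ring
  rw [hL, hR, renyi, ← hSdef,
    Real.log_div (ne_of_gt hT0) (ne_of_gt hS0)]
  have hneg : α - 1 = -(1 - α) := by ring
  rw [hneg, div_neg]
  ring
end

section
/- For α ∈ (0,1)∪(1,∞) and joint distribution p_X p_{Y|X} on finite alphabets, the Sibson mutual information admits the differential representation I_α^S(X;Y) = H_{1/α}(X) − H_α^S(X|Y), where H_α^S(X|Y) := min over reverse channels r_{X|Y} of (α/(1−α)) log Σ_{x,y} p_{X_{1/α}}(x) p_{Y|X}(y|x) r_{X|Y}(x|y)^{1−1/α}. -/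
/-!
Both extremal problems are instances of one: for positive weights `c` and `β > 0`, the map
`r ↦ ∑ i, c i * r i ^ (1 - β)` on positive distributions is maximised (`β < 1`) or minimised
(`β > 1`) at the escort distribution `r ∝ c ^ (1 / β)`, with extremal value
`(∑ i, c i ^ (1 / β)) ^ β`. This is Jensen's inequality for power means with weights `r`, and the
prefactor `1 / (β - 1)` turns both cases into a minimum.

Sibson's problem is this with `β = α` and `c y = ∑ x, p x * W x y ^ α`. The conditional problem
splits over `y` and is this with `β = 1 / α` and `c x = p_{X_{1/α}}(x) * W x y`. With
`S = ∑ y, (∑ x, p x * W x y ^ α) ^ (1 / α)` and `T = ∑ x, p x ^ (1 / α)` the two minima are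
`α/(α-1) * log S` and `α/(1-α) * log (S / T)`, while `H_{1/α}(X) = α/(α-1) * log T`.
-/

open BigOperators

open Finset Real

theorem one_div_mul_log_le_of_mul_le {t A B : ℝ} (hA : 0 < A) (hB : 0 < B) (h : t * A ≤ t * B) :
    1 / t * log A ≤ 1 / t * log B := by
  rcases lt_trichotomy t 0 with ht | rfl | ht
  · exact mul_le_mul_of_nonpos_left (log_le_log hB ((mul_le_mul_left_of_neg ht).mp h))
      (one_div_nonpos.mpr ht.le)
  · simp
  · exact mul_le_mul_of_nonneg_left (log_le_log hA (le_of_mul_le_mul_left h ht))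
      (one_div_nonneg.mpr ht.le)

section
variable {ι : Type*} [Fintype ι] {β : ℝ}

theorem IsDist.nonempty {p : ι → ℝ} (hp : IsDist p) : Nonempty ι :=
  univ_nonempty_iff.mp (nonempty_of_sum_ne_zero (hp.2 ▸ one_ne_zero))

theorem IsDist.sum_mul_le_rpow_sum_mul_rpow {r f : ι → ℝ} (hr : IsDist r) (hf : ∀ i, 0 ≤ f i)
    {p : ℝ} (hp : 1 ≤ p) : ∑ i, r i * f i ≤ (∑ i, r i * f i ^ p) ^ p⁻¹ := by
  simpa [hr.2] using inner_le_weight_mul_Lp_of_nonneg univ hp r f hr.1 hf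

theorem sum_mul_rpow_one_sub_le (hβ0 : 0 < β) (hβ1 : β ≤ 1) {c r : ι → ℝ}
    (hc : ∀ i, 0 ≤ c i) (hr : IsDist r) (hr0 : ∀ i, 0 < r i) :
    ∑ i, c i * r i ^ (1 - β) ≤ (∑ i, c i ^ (1 / β)) ^ β := by
  have hweight : ∀ i, r i * (c i / r i ^ β) = c i * r i ^ (1 - β) := fun i => by
    rw [rpow_sub (hr0 i), rpow_one]; field_simp
  have hpow : ∀ i, r i * (c i / r i ^ β) ^ (1 / β) = c i ^ (1 / β) := fun i => by
    rw [div_rpow (hc i) (rpow_nonneg (hr0 i).le _), ← rpow_mul (hr0 i).le,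
      mul_one_div_cancel hβ0.ne', rpow_one, mul_div_cancel₀ _ (hr0 i).ne']
  have := hr.sum_mul_le_rpow_sum_mul_rpow (fun i => div_nonneg (hc i) (rpow_nonneg (hr0 i).le β))
    (one_le_one_div hβ0 hβ1)
  simp only [hweight, hpow] at this
  rwa [inv_div, div_one] at this

theorem rpow_sum_rpow_le_sum_mul_rpow_one_sub (hβ1 : 1 ≤ β) {c r : ι → ℝ}
    (hc : ∀ i, 0 ≤ c i) (hr : IsDist r) (hr0 : ∀ i, 0 < r i) :
    (∑ i, c i ^ (1 / β)) ^ β ≤ ∑ i, c i * r i ^ (1 - β) := by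
  have hβ0 : 0 < β := by linarith
  have hweight : ∀ i, r i * (c i ^ (1 / β) / r i) = c i ^ (1 / β) := fun i =>
    mul_div_cancel₀ _ (hr0 i).ne'
  have hpow : ∀ i, r i * (c i ^ (1 / β) / r i) ^ β = c i * r i ^ (1 - β) := fun i => by
    rw [div_rpow (rpow_nonneg (hc i) _) (hr0 i).le, ← rpow_mul (hc i),
      one_div_mul_cancel hβ0.ne', rpow_one, rpow_sub (hr0 i), rpow_one]
    field_simp
  have := hr.sum_mul_le_rpow_sum_mul_rpow
    (fun i => div_nonneg (rpow_nonneg (hc i) (1 / β)) (hr0 i).le) hβ1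
  simp only [hweight, hpow] at this
  calc (∑ i, c i ^ (1 / β)) ^ β ≤ ((∑ i, c i * r i ^ (1 - β)) ^ β⁻¹) ^ β :=
        rpow_le_rpow (sum_nonneg fun i _ => rpow_nonneg (hc i) _) this hβ0.le
    _ = ∑ i, c i * r i ^ (1 - β) :=
        rpow_inv_rpow (sum_nonneg fun i _ => mul_nonneg (hc i) (rpow_nonneg (hr0 i).le _))
          hβ0.ne'

theorem sub_one_mul_rpow_sum_rpow_le (hβ0 : 0 < β) {c r : ι → ℝ}
    (hc : ∀ i, 0 ≤ c i) (hr : IsDist r) (hr0 : ∀ i, 0 < r i) :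
    (β - 1) * (∑ i, c i ^ (1 / β)) ^ β ≤ (β - 1) * ∑ i, c i * r i ^ (1 - β) := by
  rcases le_total β 1 with hβ1 | hβ1
  · exact mul_le_mul_of_nonpos_left (sum_mul_rpow_one_sub_le hβ0 hβ1 hc hr hr0) (by linarith)
  · exact mul_le_mul_of_nonneg_left (rpow_sum_rpow_le_sum_mul_rpow_one_sub hβ1 hc hr hr0)
      (by linarith)

variable [Nonempty ι]

theorem tilt_pos_s11 {c : ι → ℝ} (hc : ∀ i, 0 < c i) (a : ℝ) (i : ι) : 0 < tilt c a i :=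
  div_pos (rpow_pos_of_pos (hc i) a) (sum_pos (fun j _ => rpow_pos_of_pos (hc j) a) univ_nonempty)

theorem isDist_tilt_s11 {c : ι → ℝ} (hc : ∀ i, 0 < c i) (a : ℝ) : IsDist (tilt c a) := by
  refine ⟨fun i => (tilt_pos_s11 hc a i).le, ?_⟩
  simp only [tilt]
  rw [← sum_div]
  exact div_self (sum_pos (fun j _ => rpow_pos_of_pos (hc j) a) univ_nonempty).ne'

theorem sum_mul_tilt_rpow_one_sub (hβ0 : 0 < β) {c : ι → ℝ} (hc : ∀ i, 0 < c i) :
    ∑ i, c i * tilt c (1 / β) i ^ (1 - β) = (∑ i, c i ^ (1 / β)) ^ β := by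
  set Z := ∑ i, c i ^ (1 / β)
  have hZ : 0 < Z := sum_pos (fun j _ => rpow_pos_of_pos (hc j) _) univ_nonempty
  have hterm : ∀ i, c i * tilt c (1 / β) i ^ (1 - β) = c i ^ (1 / β) * Z ^ (β - 1) := fun i => by
    have hexp : 1 / β = 1 + 1 / β * (1 - β) := by field_simp; ring
    simp only [tilt]
    rw [div_rpow (rpow_nonneg (hc i).le _) hZ.le, ← rpow_mul (hc i).le, div_eq_mul_inv,
      ← rpow_neg hZ.le, neg_sub, ← mul_assoc,
      ← rpow_one_add' (hc i).le (by rw [← hexp]; positivity), ← hexp]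
  rw [sum_congr rfl fun i _ => hterm i, ← sum_mul, rpow_sub_one hZ.ne',
    mul_div_cancel₀ _ hZ.ne']

theorem isLeast_log_sum_mul_rpow_one_sub (hβ0 : 0 < β) {f : ι → ℝ} (hf : ∀ i, 0 < f i) :
    IsLeast {v | ∃ q : ι → ℝ, IsDist q ∧ (∀ i, 0 < q i) ∧
        v = 1 / (β - 1) * log (∑ i, f i * q i ^ (1 - β))}
      (1 / (β - 1) * log ((∑ i, f i ^ (1 / β)) ^ β)) := by
  refine ⟨⟨tilt f (1 / β), isDist_tilt_s11 hf _, tilt_pos_s11 hf _, by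
    rw [sum_mul_tilt_rpow_one_sub hβ0 hf]⟩, ?_⟩
  rintro v ⟨q, hq, hq0, rfl⟩
  exact one_div_mul_log_le_of_mul_le
    (rpow_pos_of_pos (sum_pos (fun i _ => rpow_pos_of_pos (hf i) _) univ_nonempty) _)
    (sum_pos (fun i _ => mul_pos (hf i) (rpow_pos_of_pos (hq0 i) _)) univ_nonempty)
    (sub_one_mul_rpow_sum_rpow_le hβ0 (fun i => (hf i).le) hq hq0)

theorem isLeast_log_sum_sum_mul_rpow_one_sub {κ : Type*} [Fintype κ] [Nonempty κ] (hβ0 : 0 < β)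
    {c : ι → κ → ℝ} (hc : ∀ i k, 0 < c i k) :
    IsLeast {v | ∃ r : κ → ι → ℝ, (∀ k, IsDist (r k)) ∧ (∀ k i, 0 < r k i) ∧
        v = 1 / (β - 1) * log (∑ i, ∑ k, c i k * r k i ^ (1 - β))}
      (1 / (β - 1) * log (∑ k, (∑ i, c i k ^ (1 / β)) ^ β)) := by
  refine ⟨⟨fun k => tilt (c · k) (1 / β), fun k => isDist_tilt_s11 (hc · k) _,
    fun k => tilt_pos_s11 (hc · k) _, ?_⟩, ?_⟩
  · rw [sum_comm]
    exact congrArg _ (congrArg _ (sum_congr rfl fun k _ =>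
      (sum_mul_tilt_rpow_one_sub hβ0 (hc · k)).symm))
  rintro v ⟨r, hr, hr0, rfl⟩
  rw [sum_comm]
  refine one_div_mul_log_le_of_mul_le
    (sum_pos (fun k _ => rpow_pos_of_pos
      (sum_pos (fun i _ => rpow_pos_of_pos (hc i k) _) univ_nonempty) _) univ_nonempty)
    (sum_pos (fun k _ => sum_pos (fun i _ => mul_pos (hc i k) (rpow_pos_of_pos (hr0 k i) _))
      univ_nonempty) univ_nonempty) ?_
  rw [mul_sum, mul_sum]
  exact sum_le_sum fun k _ => sub_one_mul_rpow_sum_rpow_le hβ0 (fun i => (hc i k).le) (hr k) (hr0 k)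

end

section
variable {X Y : Type*} [Fintype X] [Fintype Y]

theorem sum_sum_rpow_mul_rpow_eq_sum_mul_rpow {α : ℝ} {p : X → ℝ} {W : X → Y → ℝ} {q : Y → ℝ}
    (hp : ∀ x, 0 ≤ p x) (hW : ∀ x y, 0 ≤ W x y) (hq : ∀ y, 0 ≤ q y) :
    ∑ x, ∑ y, (p x * W x y) ^ α * (p x * q y) ^ (1 - α) =
      ∑ y, (∑ x, p x * W x y ^ α) * q y ^ (1 - α) := by
  rw [sum_comm]
  refine sum_congr rfl fun y _ => ?_
  rw [sum_mul]
  refine sum_congr rfl fun x _ => ?_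
  have hpx : p x ^ α * p x ^ (1 - α) = p x := by
    rw [← rpow_add' (hp x) (by norm_num), add_sub_cancel, rpow_one]
  rw [mul_rpow (hp x) (hW x y), mul_rpow (hp x) (hq y)]
  linear_combination (W x y ^ α * q y ^ (1 - α)) * hpx

theorem sum_rpow_sum_tilt_mul_rpow [Nonempty X] {a : ℝ} (ha : 0 < a) {p : X → ℝ}
    (hp : ∀ x, 0 < p x) {W : X → Y → ℝ} (hW : ∀ x y, 0 ≤ W x y) :
    ∑ y, (∑ x, (tilt p a x * W x y) ^ (1 / a)) ^ a =
      (∑ y, (∑ x, p x * W x y ^ (1 / a)) ^ a) / ∑ x, p x ^ a := by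
  set T := ∑ x, p x ^ a
  have hT : 0 < T := sum_pos (fun x _ => rpow_pos_of_pos (hp x) _) univ_nonempty
  have hterm : ∀ x y, (tilt p a x * W x y) ^ (1 / a) = p x * W x y ^ (1 / a) / T ^ (1 / a) :=
    fun x y => by
      rw [mul_rpow (tilt_pos_s11 hp a x).le (hW x y), tilt, div_rpow (rpow_nonneg (hp x).le _) hT.le,
        ← rpow_mul (hp x).le, mul_one_div_cancel ha.ne', rpow_one]
      ring
  simp only [hterm, ← sum_div]
  rw [sum_div]
  refine sum_congr rfl fun y _ => ?_
  rw [div_rpow (sum_nonneg fun x _ => mul_nonneg (hp x).le (rpow_nonneg (hW x y) _))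
    (rpow_nonneg hT.le _), ← rpow_mul hT.le, one_div_mul_cancel ha.ne', rpow_one]

end

theorem sibsonMI_diff_repr_general {X Y : Type*} [Fintype X] [Fintype Y] [Nonempty Y]
    (α : ℝ) (hα0 : 0 < α)
    (p : X → ℝ) (W : X → Y → ℝ)
    (hp : IsDist p) (hps : ∀ x, 0 < p x)
    (hWs : ∀ x y, 0 < W x y) :
    ∃ s h : ℝ,
      IsLeast {v : ℝ | ∃ q : Y → ℝ, IsDist q ∧ (∀ y, 0 < q y) ∧
          v = (1 / (α - 1)) * Real.log (∑ x, ∑ y,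
                (p x * W x y) ^ α * (p x * q y) ^ (1 - α))} s ∧
      IsLeast {v : ℝ | ∃ r : Y → X → ℝ, (∀ y, IsDist (r y)) ∧ (∀ y x, 0 < r y x) ∧
          v = (α / (1 - α)) * Real.log (∑ x, ∑ y,
                tilt p (1 / α) x * W x y * r y x ^ (1 - 1 / α))} h ∧
      s = renyi p (1 / α) - h := by
  have : Nonempty X := hp.nonempty
  have hf : ∀ y, 0 < ∑ x, p x * W x y ^ α := fun y =>
    sum_pos (fun x _ => mul_pos (hps x) (rpow_pos_of_pos (hWs x y) α)) univ_nonempty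
  have hcoef : α / (1 - α) = 1 / (1 / α - 1) := by
    rw [div_sub_one hα0.ne', one_div_div]
  refine ⟨1 / (α - 1) * log ((∑ y, (∑ x, p x * W x y ^ α) ^ (1 / α)) ^ α), _, ?_,
    hcoef ▸ isLeast_log_sum_sum_mul_rpow_one_sub (one_div_pos.mpr hα0)
      fun x y => mul_pos (tilt_pos_s11 hps _ x) (hWs x y), ?_⟩
  · convert isLeast_log_sum_mul_rpow_one_sub hα0 hf using 1
    ext v
    refine exists_congr fun q => and_congr_right fun _ => and_congr_right fun hq0 => ?_
    rw [sum_sum_rpow_mul_rpow_eq_sum_mul_rpow (fun x => (hps x).le) (fun x y => (hWs x y).le)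
      fun y => (hq0 y).le]
  · have hS : 0 < ∑ y, (∑ x, p x * W x y ^ α) ^ (1 / α) :=
      sum_pos (fun y _ => rpow_pos_of_pos (hf y) _) univ_nonempty
    have hT : 0 < ∑ x, p x ^ (1 / α) := sum_pos (fun x _ => rpow_pos_of_pos (hps x) _) univ_nonempty
    rw [sum_rpow_sum_tilt_mul_rpow (one_div_pos.mpr hα0) hps fun x y => (hWs x y).le,
      one_div_one_div, log_div hS.ne' hT.ne', log_rpow hS, renyi, one_sub_div hα0.ne',
      one_div_div, ← neg_sub α 1, div_neg]
    ring

/-- Differential representation of Sibson MI: `I_α^S(X;Y) = H_{1/α}(X) - H_α^S(X|Y)`, where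
`I_α^S(X;Y) = min_{q_Y} D_α(p_X p_{Y|X} ‖ p_X q_Y)` and
`H_α^S(X|Y) = min_{r_{X|Y}} (α/(1-α)) log Σ_{x,y} p_{X_{1/α}}(x) p_{Y|X}(y|x) r_{X|Y}(x|y)^{1-1/α}`. -/
theorem sibsonMI_diff_repr {X Y : Type*} [Fintype X] [Fintype Y] [Nonempty Y]
    (α : ℝ) (hα0 : 0 < α) (hα1 : α ≠ 1)
    (p : X → ℝ) (W : X → Y → ℝ)
    (hp : IsDist p) (hps : ∀ x, 0 < p x) (hW : IsChannel W)
    (hWs : ∀ x y, 0 < W x y) :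
    ∃ s h : ℝ,
      IsLeast {v : ℝ | ∃ q : Y → ℝ, IsDist q ∧ (∀ y, 0 < q y) ∧
          v = (1 / (α - 1)) * Real.log (∑ x, ∑ y,
                (p x * W x y) ^ α * (p x * q y) ^ (1 - α))} s ∧
      IsLeast {v : ℝ | ∃ r : Y → X → ℝ, (∀ y, IsDist (r y)) ∧ (∀ y x, 0 < r y x) ∧
          v = (α / (1 - α)) * Real.log (∑ x, ∑ y,
                tilt p (1 / α) x * W x y * r y x ^ (1 - 1 / α))} h ∧
      s = renyi p (1 / α) - h :=
  sibsonMI_diff_repr_general α hα0 p W hp hps hWs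
end

section
/- For α ∈ (0,1)∪(1,∞), the conditional Rényi quantity H_α^C(X|Y) := min over reverse channels r_{X|Y} of (α/(1−α)) Σ_x p_X(x) log Σ_y p_{Y|X}(y|x) r_{X|Y}(x|y)^{1−1/α} satisfies conditioning reduces entropy: H(X) ≥ H_α^C(X|Y), where H(X) is the Shannon entropy of p_X. -/
open BigOperators

/-!
Restricting the minimum to reverse channels `r(x|y) = q(x)` that ignore `y`, the objective
collapses (as `∑_y W(y|x) = 1`) to the cross entropy `-∑_x p(x) log q(x)`. Taking
`q = t p + (1 - t) · uniform` with `t = e^{-ε}` gives `q ≥ t p`, hence a cross entropy at most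
`H(p) + ε`.
-/

open Real Finset

section CrossEntropy

variable {X : Type*} [Fintype X]

noncomputable def crossEntropy (p q : X → ℝ) : ℝ :=
  -∑ x, p x * log (q x)

theorem crossEntropy_le_of_smul_le {p q : X → ℝ} {t : ℝ} (hp : ∀ x, 0 ≤ p x) (ht : 0 < t)
    (hq : ∀ x, t * p x ≤ q x) :
    crossEntropy p q ≤ crossEntropy p p - log t * ∑ x, p x := by
  suffices h : ∀ x, p x * log t + p x * log (p x) ≤ p x * log (q x) by
    have := sum_le_sum fun x (_ : x ∈ univ) => h x
    rw [sum_add_distrib, ← sum_mul] at this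
    simp only [crossEntropy]
    linarith
  intro x
  rcases (hp x).eq_or_lt with hpx | hpx
  · simp [← hpx]
  · rw [← mul_add, ← log_mul ht.ne' hpx.ne']
    exact mul_le_mul_of_nonneg_left (log_le_log (by positivity) (hq x)) hpx.le

theorem IsDist.exists_pos_smul_le {p : X → ℝ} (hp : IsDist p) {t : ℝ} (ht0 : 0 ≤ t) (ht : t < 1) :
    ∃ q : X → ℝ, IsDist q ∧ (∀ x, 0 < q x) ∧ ∀ x, t * p x ≤ q x := by
  have : Nonempty X := by
    by_contra hX
    simpa [not_nonempty_iff.mp hX] using hp.2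
  have hcard : (0 : ℝ) < Fintype.card X := by exact_mod_cast Fintype.card_pos
  have hc : 0 < (1 - t) / Fintype.card X := div_pos (by linarith) hcard
  have hpos : ∀ x, 0 < t * p x + (1 - t) / Fintype.card X := fun x => by
    have := hp.1 x; positivity
  refine ⟨fun x => t * p x + (1 - t) / Fintype.card X, ⟨fun x => (hpos x).le, ?_⟩, hpos,
    fun x => le_add_of_nonneg_right hc.le⟩
  rw [sum_add_distrib, ← mul_sum, hp.2, sum_const, card_univ, nsmul_eq_mul]
  field_simp
  ring

end CrossEntropy

theorem acObjective_const_eq_crossEntropy {X Y : Type*} [Fintype X] [Fintype Y] {α : ℝ}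
    (hα0 : α ≠ 0) (hα1 : α ≠ 1) (p : X → ℝ) {W : X → Y → ℝ} (hW : IsChannel W) {q : X → ℝ}
    (hq : ∀ x, 0 < q x) :
    (α / (1 - α)) * ∑ x, p x * log (∑ y, W x y * q x ^ (1 - 1 / α)) = crossEntropy p q := by
  have h1α : 1 - α ≠ 0 := sub_ne_zero.mpr hα1.symm
  simp only [← sum_mul, (hW _).2, one_mul, log_rpow (hq _), crossEntropy, mul_sum, ← sum_neg_distrib]
  refine sum_congr rfl fun x _ => ?_
  field_simp
  ring

theorem AC_cond_entropy_le_shannon_general {X Y : Type*} [Fintype X] [Fintype Y]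
    (α : ℝ) (hα0 : 0 < α) (hα1 : α ≠ 1)
    (p : X → ℝ) (W : X → Y → ℝ)
    (hp : IsDist p) (hW : IsChannel W) :
    ∀ h : ℝ,
      IsLeast {v : ℝ | ∃ r : Y → X → ℝ, (∀ y, IsDist (r y)) ∧ (∀ y x, 0 < r y x) ∧
          v = (α / (1 - α)) * ∑ x, p x *
                Real.log (∑ y, W x y * r y x ^ (1 - 1 / α))} h →
      h ≤ -∑ x, p x * Real.log (p x) := by
  intro h hh
  refine le_of_forall_pos_le_add fun ε hε => ?_
  obtain ⟨q, hq, hqpos, hpq⟩ :=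
    hp.exists_pos_smul_le (exp_pos _).le (exp_lt_one_iff.mpr (neg_lt_zero.mpr hε))
  calc h ≤ crossEntropy p q := by
        rw [← acObjective_const_eq_crossEntropy hα0.ne' hα1 p hW hqpos]
        exact hh.2 ⟨fun _ => q, fun _ => hq, fun _ => hqpos, rfl⟩
    _ ≤ crossEntropy p p - log (exp (-ε)) * ∑ x, p x :=
        crossEntropy_le_of_smul_le hp.1 (exp_pos _) hpq
    _ = -∑ x, p x * log (p x) + ε := by rw [log_exp, hp.2, crossEntropy]; ring

/-- Conditioning reduces entropy for the Augustin–Csiszár-type conditional Rényi entropy: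
`H(X) ≥ H_α^C(X|Y)`, where
`H_α^C(X|Y) = min_{r_{X|Y}} (α/(1-α)) Σ_x p_X(x) log Σ_y p_{Y|X}(y|x) r_{X|Y}(x|y)^{1-1/α}`. -/
theorem AC_cond_entropy_le_shannon {X Y : Type*} [Fintype X] [Fintype Y]
    (α : ℝ) (hα0 : 0 < α) (hα1 : α ≠ 1)
    (p : X → ℝ) (W : X → Y → ℝ)
    (hp : IsDist p) (hW : IsChannel W) (hWs : ∀ x y, 0 < W x y) :
    ∀ h : ℝ,
      IsLeast {v : ℝ | ∃ r : Y → X → ℝ, (∀ y, IsDist (r y)) ∧ (∀ y x, 0 < r y x) ∧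
          v = (α / (1 - α)) * ∑ x, p x *
                Real.log (∑ y, W x y * r y x ^ (1 - 1 / α))} h →
      h ≤ -∑ x, p x * Real.log (p x) :=
  AC_cond_entropy_le_shannon_general α hα0 hα1 p W hp hW
end

section
/- For α ∈ (0,1)∪(1,∞), the Augustin–Csiszár mutual information I_α^C(X;Y) = min_{q_Y} Σ_x p_X(x) D_α(p_{Y|X}(·|x) ‖ q_Y) admits the variational representation I_α^C(X;Y) = H(p_X) + max over reverse channels r_{X|Y} of (α/(α−1)) Σ_x p_X(x) log Σ_y p_{Y|X}(y|x) r_{X|Y}(x|y)^{1−1/α}. -/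
open BigOperators

/-!
Weak duality: for a positive distribution `q` on `Y` and a reverse channel `r`, Hölder's
inequality applied for each `x` to `a y = W x y * r y x ^ (1 - 1/α)` and `b y = q y * r y x`,
followed by Gibbs' inequality for the distribution `x ↦ ∑ y, q y * r y x`, bounds the
`r`-objective by the `q`-objective minus `H(p)`.

Equality holds for `r y x = p x * W x y ^ α * q y ^ (-α) / ∑ y', W x y' ^ α * q y' ^ (1 - α)`
as soon as `q` solves Augustin's fixed-point equation, i.e. these weights sum to `1` over `x`.
Such a `q` is a minimiser of the Augustin objective over `{q ≥ ε}`: the partial derivatives of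
the objective behave like `-q y ^ (-α)`, so for small `ε` the minimiser is interior, and moving
mass between two coordinates shows that all column sums of the weights are equal, hence `1`.
-/

open Finset Real Filter Topology

section Inequalities

variable {ι : Type*} [Fintype ι] {α : ℝ}

theorem sum_mul_log_le_sum_mul_log_self (p m : ι → ℝ) (hp : ∀ i, 0 < p i)
    (hm : ∀ i, 0 < m i) (hp1 : ∑ i, p i = 1) (hm1 : ∑ i, m i ≤ 1) :
    ∑ i, p i * log (m i) ≤ ∑ i, p i * log (p i) := by
  have hterm : ∀ i, p i * log (m i) - p i * log (p i) ≤ m i - p i := fun i => by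
    have h := log_le_sub_one_of_pos (div_pos (hm i) (hp i))
    rw [log_div (hm i).ne' (hp i).ne'] at h
    have := mul_le_mul_of_nonneg_left h (hp i).le
    rwa [mul_sub, mul_sub, mul_one, mul_div_cancel₀ _ (hp i).ne'] at this
  have := sum_le_sum fun i (_ : i ∈ univ) => hterm i
  rw [sum_sub_distrib, sum_sub_distrib, hp1] at this
  linarith

theorem div_sub_one_mul_log_sum_mul_le [Nonempty ι] (hα0 : 0 < α) (hα1 : α ≠ 1)
    (w t : ι → ℝ) (hw : ∀ i, 0 < w i) (hw1 : ∑ i, w i = 1) (ht : ∀ i, 0 < t i) :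
    α / (α - 1) * log (∑ i, w i * t i) ≤ 1 / (α - 1) * log (∑ i, w i * t i ^ α) := by
  have hmean : 0 < ∑ i, w i * t i := sum_pos (fun i _ => mul_pos (hw i) (ht i)) univ_nonempty
  have hmeanα : 0 < ∑ i, w i * t i ^ α :=
    sum_pos (fun i _ => mul_pos (hw i) (rpow_pos_of_pos (ht i) α)) univ_nonempty
  have hmem : ∀ i ∈ univ, t i ∈ Set.Ici (0 : ℝ) := fun i _ => (ht i).le
  rcases lt_or_gt_of_ne hα1 with hlt | hgt
  · have hjensen := (concaveOn_rpow hα0.le hlt.le).le_map_sum (fun i _ => (hw i).le) hw1 hmem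
    simp only [smul_eq_mul] at hjensen
    have hlog : log (∑ i, w i * t i ^ α) ≤ α * log (∑ i, w i * t i) := by
      rw [← log_rpow hmean]
      exact log_le_log hmeanα hjensen
    calc α / (α - 1) * log (∑ i, w i * t i) = α * log (∑ i, w i * t i) / (α - 1) := by ring
      _ ≤ log (∑ i, w i * t i ^ α) / (α - 1) := div_le_div_of_nonpos_of_le (by linarith) hlog
      _ = _ := by ring
  · have hjensen := (convexOn_rpow hgt.le).map_sum_le (fun i _ => (hw i).le) hw1 hmem
    simp only [smul_eq_mul] at hjensen
    have hlog : α * log (∑ i, w i * t i) ≤ log (∑ i, w i * t i ^ α) := by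
      rw [← log_rpow hmean]
      exact log_le_log (rpow_pos_of_pos hmean α) hjensen
    calc α / (α - 1) * log (∑ i, w i * t i) = α * log (∑ i, w i * t i) / (α - 1) := by ring
      _ ≤ log (∑ i, w i * t i ^ α) / (α - 1) := div_le_div_of_nonneg_right hlog (by linarith)
      _ = _ := by ring

theorem div_sub_one_mul_log_sum_le [Nonempty ι] (hα0 : 0 < α) (hα1 : α ≠ 1)
    (a b : ι → ℝ) (ha : ∀ i, 0 < a i) (hb : ∀ i, 0 < b i) :
    α / (α - 1) * log (∑ i, a i) ≤
      1 / (α - 1) * log (∑ i, a i ^ α * b i ^ (1 - α)) + log (∑ i, b i) := by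
  set B := ∑ i, b i
  have hB : 0 < B := sum_pos (fun i _ => hb i) univ_nonempty
  have hA : 0 < ∑ i, a i := sum_pos (fun i _ => ha i) univ_nonempty
  have hC : 0 < ∑ i, a i ^ α * b i ^ (1 - α) := sum_pos
    (fun i _ => mul_pos (rpow_pos_of_pos (ha i) α) (rpow_pos_of_pos (hb i) _)) univ_nonempty
  have hjensen := div_sub_one_mul_log_sum_mul_le hα0 hα1 (fun i => b i / B)
    (fun i => a i / b i) (fun i => div_pos (hb i) hB) (by rw [← sum_div, div_self hB.ne'])
    (fun i => div_pos (ha i) (hb i))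
  have hmean : ∑ i, b i / B * (a i / b i) = (∑ i, a i) / B := by
    rw [sum_div]
    exact sum_congr rfl fun i _ => by field_simp [(hb i).ne']
  have hmeanα : ∑ i, b i / B * (a i / b i) ^ α = (∑ i, a i ^ α * b i ^ (1 - α)) / B := by
    rw [sum_div]
    refine sum_congr rfl fun i _ => ?_
    rw [div_rpow (ha i).le (hb i).le, rpow_sub (hb i), rpow_one]
    field_simp [(rpow_pos_of_pos (hb i) α).ne']
  rw [hmean, hmeanα, log_div hA.ne' hB.ne', log_div hC.ne' hB.ne'] at hjensen
  have hcoef : α / (α - 1) - 1 / (α - 1) = 1 := by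
    rw [← sub_div, div_self (sub_ne_zero.mpr hα1)]
  linear_combination hjensen + log B * hcoef

end Inequalities

section Augustin

variable {X Y : Type*} [Fintype Y] {α : ℝ} {p : X → ℝ} {W : X → Y → ℝ}

noncomputable def renyiSum (α : ℝ) (W : X → Y → ℝ) (q : Y → ℝ) (x : X) : ℝ :=
  ∑ y, W x y ^ α * q y ^ (1 - α)

theorem renyiSum_pos [Nonempty Y] (hW : ∀ x y, 0 < W x y) {q : Y → ℝ} (hq : ∀ y, 0 < q y)
    (x : X) : 0 < renyiSum α W q x :=
  sum_pos (fun y _ => mul_pos (rpow_pos_of_pos (hW x y) _) (rpow_pos_of_pos (hq y) _))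
    univ_nonempty

/-- Bayes' rule for the joint law `p x * V x y` of the `α`-tilted channel
`V x y = W x y ^ α * q y ^ (1 - α) / renyiSum α W q x`, taken with `q` as output law; its
column sums `∑ x, augustinPosterior α p W q y x` are minus the gradient of `augustinObjective`
at `q`. -/
noncomputable def augustinPosterior (α : ℝ) (p : X → ℝ) (W : X → Y → ℝ) (q : Y → ℝ)
    (y : Y) (x : X) : ℝ :=
  p x * (W x y ^ α * q y ^ (-α) / renyiSum α W q x)

variable [Fintype X]

noncomputable def augustinObjective (α : ℝ) (p : X → ℝ) (W : X → Y → ℝ) (q : Y → ℝ) :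
    ℝ :=
  ∑ x, p x * (1 / (α - 1) * log (renyiSum α W q x))

noncomputable def reverseObjective (α : ℝ) (p : X → ℝ) (W : X → Y → ℝ) (r : Y → X → ℝ) :
    ℝ :=
  α / (α - 1) * ∑ x, p x * log (∑ y, W x y * r y x ^ (1 - 1 / α))

theorem reverseObjective_le [Nonempty Y] (hα0 : 0 < α) (hα1 : α ≠ 1)
    (hp : ∀ x, 0 < p x) (hp1 : ∑ x, p x = 1) (hW : ∀ x y, 0 < W x y)
    {q : Y → ℝ} (hq : ∀ y, 0 < q y) (hq1 : ∑ y, q y = 1)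
    {r : Y → X → ℝ} (hr : ∀ y x, 0 < r y x) (hr1 : ∀ y, ∑ x, r y x = 1) :
    reverseObjective α p W r ≤ augustinObjective α p W q + ∑ x, p x * log (p x) := by
  set m : X → ℝ := fun x => ∑ y, q y * r y x
  have hholder : ∀ x, α / (α - 1) * log (∑ y, W x y * r y x ^ (1 - 1 / α))
      ≤ 1 / (α - 1) * log (renyiSum α W q x) + log (m x) := fun x => by
    have h := div_sub_one_mul_log_sum_le hα0 hα1 (fun y => W x y * r y x ^ (1 - 1 / α))
      (fun y => q y * r y x) (fun y => mul_pos (hW x y) (rpow_pos_of_pos (hr y x) _))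
      (fun y => mul_pos (hq y) (hr y x))
    convert h using 4
    refine sum_congr rfl fun y _ => ?_
    have hr' := hr y x
    rw [mul_rpow (hW x y).le (rpow_pos_of_pos hr' _).le, mul_rpow (hq y).le hr'.le,
      ← rpow_mul hr'.le]
    calc W x y ^ α * q y ^ (1 - α)
        = W x y ^ α * r y x ^ ((1 - 1 / α) * α + (1 - α)) * q y ^ (1 - α) := by
          rw [show (1 - 1 / α) * α + (1 - α) = 0 by field_simp; ring, rpow_zero, mul_one]
      _ = _ := by rw [rpow_add hr']; ring
  have hgibbs : ∑ x, p x * log (m x) ≤ ∑ x, p x * log (p x) := by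
    refine sum_mul_log_le_sum_mul_log_self p m hp
      (fun x => sum_pos (fun y _ => mul_pos (hq y) (hr y x)) univ_nonempty) hp1 (le_of_eq ?_)
    rw [sum_comm]
    simp only [← mul_sum, hr1, mul_one, hq1]
  calc reverseObjective α p W r
      = ∑ x, p x * (α / (α - 1) * log (∑ y, W x y * r y x ^ (1 - 1 / α))) := by
        rw [reverseObjective, mul_sum]
        exact sum_congr rfl fun x _ => by ring
    _ ≤ ∑ x, (p x * (1 / (α - 1) * log (renyiSum α W q x)) + p x * log (m x)) :=
        sum_le_sum fun x _ => by
          rw [← mul_add]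
          exact mul_le_mul_of_nonneg_left (hholder x) (hp x).le
    _ ≤ augustinObjective α p W q + ∑ x, p x * log (p x) := by
        rw [sum_add_distrib]
        exact add_le_add_right hgibbs _

theorem reverseObjective_augustinPosterior [Nonempty Y] (hα0 : 0 < α) (hα1 : α ≠ 1)
    (hp : ∀ x, 0 < p x) (hW : ∀ x y, 0 < W x y) {q : Y → ℝ} (hq : ∀ y, 0 < q y) :
    reverseObjective α p W (augustinPosterior α p W q) =
      augustinObjective α p W q + ∑ x, p x * log (p x) := by
  have hterm : ∀ {c w s : ℝ}, 0 < c → 0 < w → 0 < s →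
      w * (c * (w ^ α * s ^ (-α))) ^ (1 - 1 / α) =
        c ^ (1 - 1 / α) * (w ^ α * s ^ (1 - α)) := by
    intro c w s hc hw hs
    rw [mul_rpow hc.le (by positivity), mul_rpow (by positivity) (by positivity),
      ← rpow_mul hw.le, ← rpow_mul hs.le, show -α * (1 - 1 / α) = 1 - α by field_simp; ring]
    calc w * (c ^ (1 - 1 / α) * (w ^ (α * (1 - 1 / α)) * s ^ (1 - α)))
        = c ^ (1 - 1 / α) * (w ^ (1 + α * (1 - 1 / α)) * s ^ (1 - α)) := by
          rw [rpow_add hw, rpow_one]; ring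
      _ = _ := by congr 3; field_simp; ring
  have hsum : ∀ x, ∑ y, W x y * augustinPosterior α p W q y x ^ (1 - 1 / α) =
      (p x / renyiSum α W q x) ^ (1 - 1 / α) * renyiSum α W q x := fun x => by
    have hc := div_pos (hp x) (renyiSum_pos (α := α) hW hq x)
    calc ∑ y, W x y * augustinPosterior α p W q y x ^ (1 - 1 / α)
        = ∑ y, (p x / renyiSum α W q x) ^ (1 - 1 / α) * (W x y ^ α * q y ^ (1 - α)) := by
          refine sum_congr rfl fun y _ => ?_
          rw [← hterm hc (hW x y) (hq y), augustinPosterior, mul_div_left_comm,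
            mul_comm (W x y ^ α * q y ^ (-α))]
      _ = _ := by rw [← mul_sum, renyiSum]
  rw [reverseObjective, augustinObjective, mul_sum, ← sum_add_distrib]
  refine sum_congr rfl fun x _ => ?_
  have hA := renyiSum_pos (α := α) hW hq x
  rw [hsum x, log_mul (rpow_pos_of_pos (div_pos (hp x) hA) _).ne' hA.ne',
    log_rpow (div_pos (hp x) hA), log_div (hp x).ne' hA.ne']
  have hα1' : α - 1 ≠ 0 := sub_ne_zero.mpr hα1
  field_simp
  ring

theorem hasDerivAt_augustinObjective_add_smul [Nonempty Y] (hα1 : α ≠ 1)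
    (hW : ∀ x y, 0 < W x y) {q : Y → ℝ} (hq : ∀ y, 0 < q y) (d : Y → ℝ) :
    HasDerivAt (fun τ : ℝ => augustinObjective α p W (q + τ • d))
      (-∑ y, d y * ∑ x, augustinPosterior α p W q y x) 0 := by
  have hline : ∀ y, HasDerivAt (fun τ : ℝ => (q + τ • d) y) (d y) 0 := fun y => by
    simpa using ((hasDerivAt_id (0 : ℝ)).mul_const (d y)).const_add (q y)
  have hrenyi : ∀ x, HasDerivAt (fun τ : ℝ => renyiSum α W (q + τ • d) x)
      (∑ y, W x y ^ α * (d y * (1 - α) * q y ^ (1 - α - 1))) 0 := fun x => by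
    refine HasDerivAt.fun_sum fun y _ => ?_
    simpa using ((hline y).rpow_const (p := 1 - α) (Or.inl (by simpa using (hq y).ne'))).const_mul
      (W x y ^ α)
  have hobj := HasDerivAt.fun_sum (u := univ) fun x _ =>
    (((hrenyi x).log (by simpa using (renyiSum_pos hW hq x).ne')).const_mul
      (1 / (α - 1))).const_mul (p x)
  refine hobj.congr_deriv ?_
  simp only [zero_smul, add_zero, augustinPosterior, mul_sum, ← sum_neg_distrib]
  rw [sum_comm]
  refine sum_congr rfl fun x _ => ?_
  have hA := (renyiSum_pos (α := α) hW hq x).ne'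
  have hα1' : α - 1 ≠ 0 := sub_ne_zero.mpr hα1
  rw [show 1 - α - 1 = -α by ring, sum_div, mul_sum, mul_sum]
  refine sum_congr rfl fun y _ => ?_
  field_simp
  ring

theorem continuousOn_augustinObjective [Nonempty Y] (hW : ∀ x y, 0 < W x y) :
    ContinuousOn (augustinObjective α p W) {q | ∀ y, 0 < q y} := by
  refine continuousOn_finsetSum _ fun x _ =>
    continuousOn_const.mul (continuousOn_const.mul ?_)
  refine ContinuousOn.log ?_ fun q hq => (renyiSum_pos hW hq x).ne'
  exact continuousOn_finsetSum _ fun y _ => continuousOn_const.mul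
    ((continuous_apply y).continuousOn.rpow_const fun q hq => Or.inl (hq y).ne')

/-- On the whole simplex the objective is infinite at the boundary (`α > 1`) or has infinite
slope there (`α < 1`); cutting it off at `ε > 0` gives a compact domain on which the objective is
continuous and differentiable. -/
def truncatedSimplex (Y : Type*) [Fintype Y] (ε : ℝ) : Set (Y → ℝ) :=
  {q | (∀ y, ε ≤ q y) ∧ ∑ y, q y = 1}

theorem isCompact_truncatedSimplex {ε : ℝ} (hε : 0 ≤ ε) :
    IsCompact (truncatedSimplex Y ε) := by
  refine (isCompact_stdSimplex ℝ Y).of_isClosed_subset ?_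
    fun q hq => ⟨fun y => hε.trans (hq.1 y), hq.2⟩
  have : truncatedSimplex Y ε = (⋂ y, {q | ε ≤ q y}) ∩ {q | ∑ y, q y = 1} := by
    ext q
    simp [truncatedSimplex]
  rw [this]
  exact (isClosed_iInter fun y => isClosed_le continuous_const (continuous_apply y)).inter
    (isClosed_eq (by fun_prop) continuous_const)

theorem exists_isMinOn_augustinObjective [Nonempty Y] (hW : ∀ x y, 0 < W x y) {ε : ℝ}
    (hε : 0 < ε) (hεY : ε * Fintype.card Y ≤ 1) :
    ∃ q ∈ truncatedSimplex Y ε,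
      IsMinOn (augustinObjective α p W) (truncatedSimplex Y ε) q := by
  have hcard : (0 : ℝ) < Fintype.card Y := by exact_mod_cast Fintype.card_pos
  have huniform : (fun _ => (Fintype.card Y : ℝ)⁻¹) ∈ truncatedSimplex Y ε := by
    refine ⟨fun _ => ?_, ?_⟩
    · rwa [← one_div, le_div_iff₀ hcard]
    · simp [hcard.ne']
  exact (isCompact_truncatedSimplex hε.le).exists_isMinOn ⟨_, huniform⟩
    ((continuousOn_augustinObjective hW).mono fun q hq y => hε.trans_le (hq.1 y))

theorem sum_augustinPosterior_le_of_isMinOn [Nonempty Y] (hα1 : α ≠ 1)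
    (hW : ∀ x y, 0 < W x y) {ε : ℝ} (hε : 0 < ε) {q : Y → ℝ}
    (hqS : q ∈ truncatedSimplex Y ε)
    (hmin : IsMinOn (augustinObjective α p W) (truncatedSimplex Y ε) q)
    (y₁ : Y) {y₂ : Y} (hy₂ : ε < q y₂) :
    ∑ x, augustinPosterior α p W q y₁ x ≤ ∑ x, augustinPosterior α p W q y₂ x := by
  classical
  set d : Y → ℝ := Pi.single y₁ 1 - Pi.single y₂ 1
  set δ := q y₂ - ε
  have hmem : ∀ τ ∈ Set.Icc 0 δ, q + τ • d ∈ truncatedSimplex Y ε := by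
    rintro τ ⟨hτ0, hτδ⟩
    refine ⟨fun y => ?_, ?_⟩
    · have hτs : 0 ≤ τ * (Pi.single y₁ 1 : Y → ℝ) y :=
        mul_nonneg hτ0 (by rw [Pi.single_apply]; split_ifs <;> norm_num)
      simp only [Pi.add_apply, Pi.smul_apply, smul_eq_mul, d, Pi.sub_apply, mul_sub]
      by_cases h : y = y₂
      · subst h
        rw [Pi.single_eq_same]
        linarith
      · rw [Pi.single_eq_of_ne h]
        linarith [hqS.1 y]
    · simp [d, sum_add_distrib, ← mul_sum, sum_sub_distrib, hqS.2]
  have hlocal : IsLocalMinOn (fun τ : ℝ => augustinObjective α p W (q + τ • d))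
      (Set.Icc 0 δ) 0 :=
    IsMinOn.localize fun τ hτ => by simpa using hmin (hmem τ hτ)
  have hderiv := hasDerivAt_augustinObjective_add_smul (p := p) hα1 hW
    (fun y => hε.trans_le (hqS.1 y)) d
  have hsign := hlocal.hasFDerivWithinAt_nonneg hderiv.hasFDerivAt.hasFDerivWithinAt
    (y := δ) (mem_posTangentConeAt_of_segment_subset
      (by rw [zero_add, segment_eq_Icc (sub_nonneg.2 hy₂.le)]))
  simp only [d, Pi.sub_apply, Pi.single_apply, sub_mul, ite_mul, one_mul, zero_mul,
    sum_sub_distrib, sum_ite_eq', mem_univ, if_true, neg_sub,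
    ContinuousLinearMap.toSpanSingleton_apply, smul_eq_mul] at hsign
  linarith [(mul_nonneg_iff_of_pos_left (sub_pos.2 hy₂)).1 hsign]

theorem sum_mul_sum_augustinPosterior [Nonempty Y] (hW : ∀ x y, 0 < W x y) {q : Y → ℝ}
    (hq : ∀ y, 0 < q y) :
    ∑ y, q y * ∑ x, augustinPosterior α p W q y x = ∑ x, p x := by
  simp only [mul_sum]
  rw [sum_comm]
  refine sum_congr rfl fun x _ => ?_
  have hA := (renyiSum_pos (α := α) hW hq x).ne'
  calc ∑ y, q y * augustinPosterior α p W q y x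
      = p x * (∑ y, W x y ^ α * q y ^ (1 - α)) / renyiSum α W q x := by
        rw [mul_sum, sum_div]
        refine sum_congr rfl fun y _ => ?_
        rw [augustinPosterior, sub_eq_add_neg, rpow_add (hq y), rpow_one]
        ring
    _ = p x := by rw [← renyiSum, mul_div_assoc, div_self hA, mul_one]

/-- `hεW` makes `W x y / q y` at a coordinate with `q y ≤ ε` larger than at a coordinate with
`q y ≥ 1 / |Y|`, so moving mass towards the small coordinate would decrease the objective. -/
theorem lt_of_isMinOn_augustinObjective [Nonempty X] [Nonempty Y] (hα0 : 0 < α) (hα1 : α ≠ 1)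
    (hp : ∀ x, 0 < p x) (hW : ∀ x y, 0 < W x y) {ε : ℝ} (hε : 0 < ε)
    (hεY : ε * Fintype.card Y < 1)
    (hεW : ∀ x y y', ε * W x y' < W x y * (Fintype.card Y : ℝ)⁻¹)
    {q : Y → ℝ} (hqS : q ∈ truncatedSimplex Y ε)
    (hmin : IsMinOn (augustinObjective α p W) (truncatedSimplex Y ε) q) (y : Y) :
    ε < q y := by
  by_contra! hy
  have hcard : (0 : ℝ) < Fintype.card Y := by exact_mod_cast Fintype.card_pos
  have hq : ∀ y, 0 < q y := fun y => hε.trans_le (hqS.1 y)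
  obtain ⟨y', -, hy'⟩ := exists_le_of_sum_le univ_nonempty
    (f := fun _ => (Fintype.card Y : ℝ)⁻¹) (g := q) (by simp [hqS.2, hcard.ne'])
  have hεy' : ε < q y' := by
    refine lt_of_lt_of_le ?_ hy'
    rwa [← one_div, lt_div_iff₀ hcard]
  refine (sum_augustinPosterior_le_of_isMinOn hα1 hW hε hqS hmin y hεy').not_gt
    (sum_lt_sum_of_nonempty univ_nonempty fun x _ => ?_)
  have hratio : W x y' / q y' < W x y / q y := by
    rw [div_lt_div_iff₀ (hq y') (hq y)]
    calc W x y' * q y ≤ ε * W x y' := by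
          rw [mul_comm ε]
          exact mul_le_mul_of_nonneg_left hy (hW x y').le
      _ < W x y * (Fintype.card Y : ℝ)⁻¹ := hεW x y y'
      _ ≤ W x y * q y' := mul_le_mul_of_nonneg_left hy' (hW x y).le
  have hpow : ∀ y, W x y ^ α * q y ^ (-α) = (W x y / q y) ^ α := fun y => by
    rw [div_rpow (hW x y).le (hq y).le, rpow_neg (hq y).le, div_eq_mul_inv]
  simp only [augustinPosterior, hpow]
  have := renyiSum_pos (α := α) hW hq x
  have := hp x
  have := div_pos (hW x y') (hq y')
  gcongr

theorem exists_sum_augustinPosterior_eq_one [Nonempty X] [Nonempty Y] (hα0 : 0 < α)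
    (hα1 : α ≠ 1) (hp : ∀ x, 0 < p x) (hp1 : ∑ x, p x = 1) (hW : ∀ x y, 0 < W x y) :
    ∃ q : Y → ℝ, (∀ y, 0 < q y) ∧ ∑ y, q y = 1 ∧
      ∀ y, ∑ x, augustinPosterior α p W q y x = 1 := by
  have hn : (0 : ℝ) < Fintype.card Y := by exact_mod_cast Fintype.card_pos
  set n : ℝ := (Fintype.card Y : ℝ)
  have hsmall : ∀ c b : ℝ, 0 < b → ∀ᶠ ε in 𝓝 (0 : ℝ), ε * c < b := fun c b hb =>
    (continuous_id.mul continuous_const).continuousAt.eventually_lt continuousAt_const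
      (by simpa using hb)
  have hevent : ∀ᶠ ε in 𝓝[>] (0 : ℝ),
      0 < ε ∧ ε * n < 1 ∧ ∀ x y y', ε * W x y' < W x y * n⁻¹ :=
    Eventually.and self_mem_nhdsWithin <| nhdsWithin_le_nhds <| (hsmall n 1 one_pos).and <|
      eventually_all.2 fun x => eventually_all.2 fun y => eventually_all.2 fun y' =>
        hsmall _ _ (mul_pos (hW x y) (inv_pos.2 hn))
  obtain ⟨ε, hε, hεn, hεW⟩ := hevent.exists
  obtain ⟨q, hqS, hmin⟩ := exists_isMinOn_augustinObjective (p := p) (α := α) hW hε hεn.le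
  have hint := lt_of_isMinOn_augustinObjective hα0 hα1 hp hW hε hεn hεW hqS hmin
  have hconst : ∀ y y', ∑ x, augustinPosterior α p W q y' x =
      ∑ x, augustinPosterior α p W q y x := fun y y' =>
    le_antisymm (sum_augustinPosterior_le_of_isMinOn hα1 hW hε hqS hmin y' (hint y))
      (sum_augustinPosterior_le_of_isMinOn hα1 hW hε hqS hmin y (hint y'))
  have hq : ∀ y, 0 < q y := fun y => hε.trans (hint y)
  refine ⟨q, hq, hqS.2, fun y => ?_⟩
  have htotal := sum_mul_sum_augustinPosterior (α := α) (p := p) hW hq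
  simpa only [hconst y, ← sum_mul, hqS.2, one_mul, hp1] using htotal

end Augustin

/-- Variational representation of the Augustin–Csiszár MI:
`I_α^C(X;Y) = min_{q_Y} Σ_x p_X(x) D_α(p_{Y|X}(·|x) ‖ q_Y)`
`           = H(p_X) + max_{r_{X|Y}} (α/(α-1)) Σ_x p_X(x) log Σ_y p_{Y|X}(y|x) r_{X|Y}(x|y)^{1-1/α}`. -/
theorem augustinCsiszarMI_variational {X Y : Type*} [Fintype X] [Fintype Y]
    (α : ℝ) (hα0 : 0 < α) (hα1 : α ≠ 1)
    (p : X → ℝ) (W : X → Y → ℝ)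
    (hp : IsDist p) (hps : ∀ x, 0 < p x) (hW : IsChannel W) (hWs : ∀ x y, 0 < W x y) :
    ∃ i m : ℝ,
      IsLeast {v : ℝ | ∃ q : Y → ℝ, IsDist q ∧ (∀ y, 0 < q y) ∧
          v = ∑ x, p x * ((1 / (α - 1)) *
                Real.log (∑ y, W x y ^ α * q y ^ (1 - α)))} i ∧
      IsGreatest {v : ℝ | ∃ r : Y → X → ℝ, (∀ y, IsDist (r y)) ∧ (∀ y x, 0 < r y x) ∧
          v = (α / (α - 1)) * ∑ x, p x *
                Real.log (∑ y, W x y * r y x ^ (1 - 1 / α))} m ∧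
      i = (-∑ x, p x * Real.log (p x)) + m := by
  have : Nonempty X := univ_nonempty_iff.mp (nonempty_of_sum_ne_zero (hp.2 ▸ one_ne_zero))
  have : Nonempty Y := univ_nonempty_iff.mp
    (nonempty_of_sum_ne_zero ((hW (Classical.arbitrary X)).2 ▸ one_ne_zero))
  obtain ⟨q, hq, hq1, hfix⟩ := exists_sum_augustinPosterior_eq_one hα0 hα1 hps hp.2 hWs
  have hequality := reverseObjective_augustinPosterior hα0 hα1 hps hWs hq
  set r := augustinPosterior α p W q
  have hr : ∀ y x, 0 < r y x := fun y x => mul_pos (hps x) <| div_pos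
    (mul_pos (rpow_pos_of_pos (hWs x y) _) (rpow_pos_of_pos (hq y) _)) (renyiSum_pos hWs hq x)
  refine ⟨augustinObjective α p W q, reverseObjective α p W r,
    ⟨⟨q, ⟨fun y => (hq y).le, hq1⟩, hq, rfl⟩, ?_⟩,
    ⟨⟨r, fun y => ⟨fun x => (hr y x).le, hfix y⟩, hr, rfl⟩, ?_⟩, by linarith⟩
  · rintro _ ⟨q', hq', hq'pos, rfl⟩
    show augustinObjective α p W q ≤ augustinObjective α p W q'
    linarith [reverseObjective_le hα0 hα1 hps hp.2 hWs hq'pos hq'.2 hr hfix]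
  · rintro _ ⟨r', hr', hr'pos, rfl⟩
    show reverseObjective α p W r' ≤ reverseObjective α p W r
    linarith [reverseObjective_le hα0 hα1 hps hp.2 hWs hq hq1 hr'pos fun y => (hr' y).2]
end

section
/- For α ∈ (0,1)∪(1,∞), joint distribution p_X p_{Y|X} on finite alphabets, and uniform distribution u_X on X, the Arimoto mutual information satisfies I_α^A(X;Y) = min over distributions q_Y of { D_α(p_X p_{Y|X} ‖ u_X q_Y) − D_α(p_X ‖ u_X) }. -/
open BigOperators

/-!
Writing `A y = ∑ₓ p(x)^α W(y|x)^α`, the factor `|X|^{α-1}` cancels between the two divergences,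
leaving `(1/(α-1)) (log ∑_y A y q(y)^{1-α} - log ∑ₓ p(x)^α)`. With `z y = A y^{1/α} / q y` one has
`∑_y A y q(y)^{1-α} = ∑_y q(y) z(y)^α` and `∑_y q(y) z(y) = ∑_y A y^{1/α} =: S`, so Jensen's
inequality for `t ↦ t^α` (concave for `α < 1`, convex for `α > 1`) bounds the objective below by
`(α/(α-1)) log S`, with equality at the tilted distribution `q y = A y^{1/α} / S`, where `z ≡ S`.
Finally `(α/(α-1)) log S - (1/(α-1)) log ∑ₓ p(x)^α` is exactly `H_α(X) - H_α^A(X|Y)`.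
-/

open Real Finset

section SibsonMinimization

variable {ι : Type*} [Fintype ι] {α : ℝ} {A q : ι → ℝ}

lemma mul_rpow_div_eq_mul_rpow_one_sub {a t : ℝ} (hα : α ≠ 0) (ha : 0 ≤ a) (ht : 0 < t) :
    t * (a ^ (1 / α) / t) ^ α = a * t ^ (1 - α) := by
  rw [div_rpow (rpow_nonneg ha _) ht.le, ← rpow_mul ha, one_div_mul_cancel hα, rpow_one,
    rpow_sub ht, rpow_one]
  field_simp

lemma sum_mul_rpow_one_sub_le_of_lt_one (hα0 : 0 < α) (hα1 : α < 1) (hA : ∀ i, 0 ≤ A i)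
    (hq : IsDist q) (hqpos : ∀ i, 0 < q i) :
    ∑ i, A i * q i ^ (1 - α) ≤ (∑ i, A i ^ (1 / α)) ^ α := by
  have hjensen := (Real.concaveOn_rpow hα0.le hα1.le).le_map_sum (t := univ) (w := q)
    (p := fun i ↦ A i ^ (1 / α) / q i) (fun i _ ↦ hq.1 i) hq.2
    (fun i _ ↦ div_nonneg (rpow_nonneg (hA i) _) (hqpos i).le)
  simpa only [smul_eq_mul, mul_rpow_div_eq_mul_rpow_one_sub hα0.ne' (hA _) (hqpos _),
    mul_div_cancel₀ _ (hqpos _).ne'] using hjensen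

lemma rpow_sum_le_sum_mul_rpow_one_sub_of_one_lt (hα1 : 1 < α) (hA : ∀ i, 0 ≤ A i)
    (hq : IsDist q) (hqpos : ∀ i, 0 < q i) :
    (∑ i, A i ^ (1 / α)) ^ α ≤ ∑ i, A i * q i ^ (1 - α) := by
  have hjensen := (convexOn_rpow hα1.le).map_sum_le (t := univ) (w := q)
    (p := fun i ↦ A i ^ (1 / α) / q i) (fun i _ ↦ hq.1 i) hq.2
    (fun i _ ↦ div_nonneg (rpow_nonneg (hA i) _) (hqpos i).le)
  simpa only [smul_eq_mul, mul_rpow_div_eq_mul_rpow_one_sub (by positivity) (hA _) (hqpos _),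
    mul_div_cancel₀ _ (hqpos _).ne'] using hjensen

lemma sum_mul_rpow_one_sub_tilted (hα : α ≠ 0) (hA : ∀ i, 0 < A i) (hS : 0 < ∑ i, A i ^ (1 / α)) :
    ∑ i, A i * (A i ^ (1 / α) / ∑ j, A j ^ (1 / α)) ^ (1 - α) = (∑ i, A i ^ (1 / α)) ^ α := by
  set S := ∑ i, A i ^ (1 / α)
  have htilted (i : ι) : A i ^ (1 / α) / (A i ^ (1 / α) / S) = S :=
    div_div_cancel₀ (rpow_pos_of_pos (hA i) _).ne'
  calc ∑ i, A i * (A i ^ (1 / α) / S) ^ (1 - α)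
      = ∑ i, A i ^ (1 / α) / S * S ^ α := sum_congr rfl fun i _ ↦ by
        rw [← mul_rpow_div_eq_mul_rpow_one_sub hα (hA i).le
          (div_pos (rpow_pos_of_pos (hA i) _) hS), htilted]
    _ = S ^ α := by rw [← sum_mul, ← sum_div, div_self hS.ne', one_mul]

theorem isLeast_inv_sub_one_mul_log_sum_mul_rpow_one_sub [Nonempty ι] (hα0 : 0 < α)
    (hα1 : α ≠ 1) (hA : ∀ i, 0 < A i) :
    IsLeast {v : ℝ | ∃ q : ι → ℝ, IsDist q ∧ (∀ i, 0 < q i) ∧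
        v = (1 / (α - 1)) * log (∑ i, A i * q i ^ (1 - α))}
      ((α / (α - 1)) * log (∑ i, A i ^ (1 / α))) := by
  set S := ∑ i, A i ^ (1 / α)
  have hS : 0 < S := sum_pos (fun i _ ↦ rpow_pos_of_pos (hA i) _) univ_nonempty
  have hval : α / (α - 1) * log S = 1 / (α - 1) * log (S ^ α) := by
    rw [log_rpow hS]; ring
  refine ⟨⟨fun i ↦ A i ^ (1 / α) / S, ⟨fun i ↦ by have := hA i; positivity, ?_⟩,
    fun i ↦ by have := hA i; positivity, ?_⟩, ?_⟩
  · rw [← sum_div, div_self hS.ne']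
  · rw [sum_mul_rpow_one_sub_tilted hα0.ne' hA hS, hval]
  rintro v ⟨q, hq, hqpos, rfl⟩
  have hT : 0 < ∑ i, A i * q i ^ (1 - α) :=
    sum_pos (fun i _ ↦ mul_pos (hA i) (rpow_pos_of_pos (hqpos i) _)) univ_nonempty
  rw [hval]
  rcases hα1.lt_or_gt with hlt | hgt
  · refine mul_le_mul_of_nonpos_left ?_ (div_nonpos_of_nonneg_of_nonpos zero_le_one (by linarith))
    exact log_le_log hT (sum_mul_rpow_one_sub_le_of_lt_one hα0 hlt (fun i ↦ (hA i).le) hq hqpos)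
  · refine mul_le_mul_of_nonneg_left ?_ (div_nonneg zero_le_one (by linarith))
    exact log_le_log (by positivity)
      (rpow_sum_le_sum_mul_rpow_one_sub_of_one_lt hgt (fun i ↦ (hA i).le) hq hqpos)

end SibsonMinimization

lemma sum_sum_mul_rpow_const_mul_rpow {X Y : Type*} [Fintype X] [Fintype Y] {α c : ℝ}
    {p : X → ℝ} {W : X → Y → ℝ} {q : Y → ℝ} (hp : ∀ x, 0 ≤ p x) (hW : ∀ x y, 0 ≤ W x y)
    (hc : 0 ≤ c) (hq : ∀ y, 0 ≤ q y) :
    ∑ x, ∑ y, (p x * W x y) ^ α * (c * q y) ^ (1 - α)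
      = c ^ (1 - α) * ∑ y, (∑ x, p x ^ α * W x y ^ α) * q y ^ (1 - α) := by
  rw [sum_comm, mul_sum]
  refine sum_congr rfl fun y _ ↦ ?_
  rw [sum_mul, mul_sum]
  refine sum_congr rfl fun x _ ↦ ?_
  rw [mul_rpow (hp x) (hW x y), mul_rpow hc (hq y)]
  ring

theorem arimotoMI_eq_min_div_uniform_general {X Y : Type*} [Fintype X] [Fintype Y]
    [Nonempty X] [Nonempty Y]
    (α : ℝ) (hα0 : 0 < α) (hα1 : α ≠ 1)
    (p : X → ℝ) (W : X → Y → ℝ)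
    (hps : ∀ x, 0 < p x) (hW : IsChannel W)
    (hWc : ∀ y, ∃ x, 0 < W x y) :
    IsLeast {v : ℝ | ∃ q : Y → ℝ, IsDist q ∧ (∀ y, 0 < q y) ∧
        v = (1 / (α - 1)) * Real.log (∑ x, ∑ y,
              (p x * W x y) ^ α * (((Fintype.card X : ℝ))⁻¹ * q y) ^ (1 - α))
          - (1 / (α - 1)) * Real.log (∑ x, p x ^ α * ((Fintype.card X : ℝ)⁻¹) ^ (1 - α))}
      (renyi p α
        - (α / (1 - α)) * Real.log (∑ y, (∑ x, p x ^ α * W x y ^ α) ^ (1 / α))) := by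
  set c : ℝ := (Fintype.card X : ℝ)⁻¹
  have hc : 0 < c ^ (1 - α) := by positivity
  set A : Y → ℝ := fun y ↦ ∑ x, p x ^ α * W x y ^ α
  have hA (y : Y) : 0 < A y := by
    obtain ⟨x, hx⟩ := hWc y
    exact sum_pos' (fun x _ ↦ mul_nonneg (rpow_nonneg (hps x).le _) (rpow_nonneg ((hW x).1 y) _))
      ⟨x, mem_univ x, mul_pos (rpow_pos_of_pos (hps x) _) (rpow_pos_of_pos hx _)⟩
  have hP : 0 < ∑ x, p x ^ α := sum_pos (fun x _ ↦ rpow_pos_of_pos (hps x) _) univ_nonempty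
  have hobj (q : Y → ℝ) (hq : ∀ y, 0 < q y) :
      1 / (α - 1) * log (∑ x, ∑ y, (p x * W x y) ^ α * (c * q y) ^ (1 - α))
        - 1 / (α - 1) * log (∑ x, p x ^ α * c ^ (1 - α))
      = 1 / (α - 1) * log (∑ y, A y * q y ^ (1 - α)) - 1 / (α - 1) * log (∑ x, p x ^ α) := by
    have hT : 0 < ∑ y, A y * q y ^ (1 - α) :=
      sum_pos (fun y _ ↦ mul_pos (hA y) (rpow_pos_of_pos (hq y) _)) univ_nonempty
    rw [sum_sum_mul_rpow_const_mul_rpow (fun x ↦ (hps x).le) (fun x ↦ (hW x).1) (by positivity)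
      (fun y ↦ (hq y).le), ← sum_mul, log_mul hc.ne' hT.ne', log_mul hP.ne' hc.ne']
    ring
  have htarget : renyi p α - α / (1 - α) * log (∑ y, A y ^ (1 / α))
      = α / (α - 1) * log (∑ y, A y ^ (1 / α)) - 1 / (α - 1) * log (∑ x, p x ^ α) := by
    have : α - 1 ≠ 0 := sub_ne_zero.mpr hα1
    rw [renyi, show 1 - α = -(α - 1) by ring]
    field_simp
    ring
  obtain ⟨⟨q, hq, hqpos, hv⟩, hlower⟩ :=
    isLeast_inv_sub_one_mul_log_sum_mul_rpow_one_sub hα0 hα1 hA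
  rw [htarget]
  refine ⟨⟨q, hq, hqpos, by rw [hobj q hqpos, ← hv]⟩, ?_⟩
  rintro v ⟨q, hq, hqpos, rfl⟩
  rw [hobj q hqpos]
  linarith [hlower ⟨q, hq, hqpos, rfl⟩]

/-- Arimoto MI of order α, `I_α^A(X;Y) = H_α(X) - H_α^A(X|Y)`, equals
`min_{q_Y} { D_α(p_X p_{Y|X} ‖ u_X q_Y) - D_α(p_X ‖ u_X) }`, where `u_X` is the
uniform distribution on `X`. -/
theorem arimotoMI_eq_min_div_uniform {X Y : Type*} [Fintype X] [Fintype Y]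
    [Nonempty X] [Nonempty Y]
    (α : ℝ) (hα0 : 0 < α) (hα1 : α ≠ 1)
    (p : X → ℝ) (W : X → Y → ℝ)
    (hp : IsDist p) (hps : ∀ x, 0 < p x) (hW : IsChannel W)
    (hWc : ∀ y, ∃ x, 0 < W x y) :
    IsLeast {v : ℝ | ∃ q : Y → ℝ, IsDist q ∧ (∀ y, 0 < q y) ∧
        v = (1 / (α - 1)) * Real.log (∑ x, ∑ y,
              (p x * W x y) ^ α * (((Fintype.card X : ℝ))⁻¹ * q y) ^ (1 - α))
          - (1 / (α - 1)) * Real.log (∑ x, p x ^ α * ((Fintype.card X : ℝ)⁻¹) ^ (1 - α))}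
      (renyi p α
        - (α / (1 - α)) * Real.log (∑ y, (∑ x, p x ^ α * W x y ^ α) ^ (1 / α))) :=
  arimotoMI_eq_min_div_uniform_general α hα0 hα1 p W hps hW hWc
end
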